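/- arXiv:1702.03680 — 8 statements merged into one kernel-verified Lean document; each statement's English description precedes it below -/
import Mathlib

section
/- The Euler integral of the symmetric two-centre problem is conserved: if x, y : ℝ → ℝ³ are differentiable curves with x(t) ∉ {−x₀, x₀} for all t, satisfying Hamilton's equations ẋ(t) = y(t) and ẏ(t) = −m₊·(x(t)+x₀)/|x(t)+x₀|³ − m₋·(x(t)−x₀)/|x(t)−x₀|³, then the function t ↦ |x(t) × y(t)|² + (x₀ · y(t))² + 2·(x(t) · x₀)·( m₊/|x(t)+x₀| − m₋/|x(t)−x₀| ) is constant. -/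
open scoped Matrix

/-- Euclidean norm on `Fin 3 → ℝ`. -/
noncomputable def norm3 (v : Fin 3 → ℝ) : ℝ := Real.sqrt (v ⬝ᵥ v)

/-- The Euler integral of the symmetric two-centre problem with masses `mp`, `mm`
placed at `-x₀`, `x₀`:
`𝒢_sim = |x × y|² + (x₀ · y)² + 2 (x · x₀)(mp/|x+x₀| − mm/|x−x₀|)`. -/
noncomputable def eulerSym (x₀ : Fin 3 → ℝ) (mp mm : ℝ) (x y : Fin 3 → ℝ) : ℝ :=
  norm3 (x ⨯₃ y) ^ 2 + (x₀ ⬝ᵥ y) ^ 2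
    + 2 * (x ⬝ᵥ x₀) * (mp / norm3 (x + x₀) - mm / norm3 (x - x₀))

/-! Along the flow `ẋ = y`, `ẏ = -a (x + x₀) - b (x - x₀)` with `a = m₊/|x+x₀|³`,
`b = m₋/|x-x₀|³`, the term `|x × y|²` changes at the rate `2 (x × y)·(x × ẏ)`, which the
Lagrange identity `(u × v)·(w × z) = (u·w)(v·z) - (u·z)(v·w)` turns into a polynomial in the
dot products of `x`, `x₀`, `y` and in `a`, `b`. Writing `m₊/|x+x₀| = a |x+x₀|²` and
`m₋/|x-x₀| = b |x-x₀|²` does the same for the other two terms, and the three rates then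
cancel identically. -/

lemma norm3_sq (v : Fin 3 → ℝ) : norm3 v ^ 2 = v ⬝ᵥ v :=
  Real.sq_sqrt (by simpa using dotProduct_self_star_nonneg v)

lemma norm3_pos {v : Fin 3 → ℝ} (hv : v ≠ 0) : 0 < norm3 v :=
  Real.sqrt_pos.2 (by simpa using Matrix.dotProduct_self_star_pos_iff.2 hv)

theorem LinearMap.hasDerivAt_of_bilinear {𝕜 E F G : Type*} [NontriviallyNormedField 𝕜]
    [CompleteSpace 𝕜] [NormedAddCommGroup E] [NormedSpace 𝕜 E] [FiniteDimensional 𝕜 E]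
    [NormedAddCommGroup F] [NormedSpace 𝕜 F] [FiniteDimensional 𝕜 F]
    [NormedAddCommGroup G] [NormedSpace 𝕜 G]
    (B : E →ₗ[𝕜] F →ₗ[𝕜] G) {u : 𝕜 → E} {v : 𝕜 → F} {u' : E} {v' : F} {t : 𝕜}
    (hu : HasDerivAt u u' t) (hv : HasDerivAt v v' t) :
    HasDerivAt (fun s => B (u s) (v s)) (B (u t) v' + B u' (v t)) t :=
  B.toContinuousBilinearMap.hasDerivAt_of_bilinear (fun _ => hu) (fun _ => hv)

section Curves

variable {u v : ℝ → Fin 3 → ℝ} {u' v' : Fin 3 → ℝ} {t : ℝ}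

theorem HasDerivAt.dotProduct (hu : HasDerivAt u u' t) (hv : HasDerivAt v v' t) :
    HasDerivAt (fun s => u s ⬝ᵥ v s) (u t ⬝ᵥ v' + u' ⬝ᵥ v t) t :=
  (dotProductBilin ℝ ℝ).hasDerivAt_of_bilinear hu hv

theorem HasDerivAt.cross (hu : HasDerivAt u u' t) (hv : HasDerivAt v v' t) :
    HasDerivAt (fun s => u s ⨯₃ v s) (u t ⨯₃ v' + u' ⨯₃ v t) t :=
  crossProduct.hasDerivAt_of_bilinear hu hv

theorem HasDerivAt.div_norm3 (m : ℝ) (hv : HasDerivAt v v' t) (hne : v t ≠ 0) :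
    HasDerivAt (fun s => m / norm3 (v s)) (-(m / norm3 (v t) ^ 3 * (v t ⬝ᵥ v'))) t := by
  have hr : HasDerivAt (fun s => norm3 (v s)) ((v t ⬝ᵥ v' + v' ⬝ᵥ v t) / (2 * norm3 (v t))) t :=
    (hv.dotProduct hv).sqrt (dotProduct_self_eq_zero.not.2 hne)
  have hpos := norm3_pos hne
  refine ((hasDerivAt_const t m).div hr hpos.ne').congr_deriv ?_
  rw [dotProduct_comm v']
  field_simp
  ring

end Curves

section TwoCentre

variable (x₀ : Fin 3 → ℝ) (mp mm : ℝ)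

noncomputable def twoCentreForce (x : Fin 3 → ℝ) : Fin 3 → ℝ :=
  -((mp / norm3 (x + x₀) ^ 3) • (x + x₀)) - (mm / norm3 (x - x₀) ^ 3) • (x - x₀)

noncomputable def eulerSymDeriv (x y x' y' : Fin 3 → ℝ) : ℝ :=
  2 * ((x ⨯₃ y) ⬝ᵥ (x ⨯₃ y' + x' ⨯₃ y)) + 2 * (x₀ ⬝ᵥ y) * (x₀ ⬝ᵥ y')
    + 2 * (x' ⬝ᵥ x₀) * (mp / norm3 (x + x₀) - mm / norm3 (x - x₀))
    - 2 * (x ⬝ᵥ x₀) * (mp / norm3 (x + x₀) ^ 3 * ((x + x₀) ⬝ᵥ x')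
      - mm / norm3 (x - x₀) ^ 3 * ((x - x₀) ⬝ᵥ x'))

variable {x₀ mp mm}

theorem hasDerivAt_eulerSym {x y : ℝ → Fin 3 → ℝ} {x' y' : Fin 3 → ℝ} {t : ℝ}
    (hx : HasDerivAt x x' t) (hy : HasDerivAt y y' t)
    (hp : x t + x₀ ≠ 0) (hm : x t - x₀ ≠ 0) :
    HasDerivAt (fun s => eulerSym x₀ mp mm (x s) (y s))
      (eulerSymDeriv x₀ mp mm (x t) (y t) x' y') t := by
  have hc := hx.cross hy
  have hL := (hc.dotProduct hc).add (((hasDerivAt_const t x₀).dotProduct hy).pow 2)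
  have hV := ((hx.dotProduct (hasDerivAt_const t x₀)).const_mul 2).mul
    (((hx.add_const x₀).div_norm3 mp hp).sub ((hx.sub_const x₀).div_norm3 mm hm))
  simp only [eulerSym, norm3_sq]
  refine (hL.add hV).congr_deriv ?_
  simp only [eulerSymDeriv, Pi.sub_apply, dotProduct_zero, zero_dotProduct,
    dotProduct_comm (x t ⨯₃ y' + x' ⨯₃ y t)]
  ring

theorem eulerSymDeriv_twoCentreForce {x y : Fin 3 → ℝ} (hp : x + x₀ ≠ 0) (hm : x - x₀ ≠ 0) :
    eulerSymDeriv x₀ mp mm x y y (twoCentreForce x₀ mp mm x) = 0 := by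
  have div_norm3_eq (m : ℝ) (v : Fin 3 → ℝ) (hv : v ≠ 0) :
      m / norm3 v = m / norm3 v ^ 3 * (v ⬝ᵥ v) := by
    rw [← norm3_sq]
    field_simp [(norm3_pos hv).ne']
  simp only [eulerSymDeriv, twoCentreForce, cross_self, add_zero, div_norm3_eq mp _ hp,
    div_norm3_eq mm _ hm]
  generalize mp / norm3 (x + x₀) ^ 3 = a
  generalize mm / norm3 (x - x₀) ^ 3 = b
  simp only [map_sub, map_neg, map_smul, map_add, cross_self, zero_add, zero_sub,
    dotProduct_sub, dotProduct_neg, dotProduct_smul, dotProduct_add, add_dotProduct,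
    sub_dotProduct, smul_eq_mul, cross_dot_cross]
  rw [dotProduct_comm y x, dotProduct_comm y x₀, dotProduct_comm x₀ x]
  ring

end TwoCentre

/-- the Euler integral of the symmetric two-centre problem is conserved
along solutions of the Hamiltonian system of
`h_sim(y,x) = |y|²/2 − mp/|x+x₀| − mm/|x−x₀|`, i.e. `ẋ = y`,
`ẏ = −mp (x+x₀)/|x+x₀|³ − mm (x−x₀)/|x−x₀|³`. -/
theorem eulerSym_conserved (x₀ : Fin 3 → ℝ) (mp mm : ℝ)
    (x y : ℝ → Fin 3 → ℝ)
    (hcol : ∀ t, x t ≠ -x₀ ∧ x t ≠ x₀)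
    (hx : ∀ t, HasDerivAt x (y t) t)
    (hy : ∀ t, HasDerivAt y
      (-((mp / norm3 (x t + x₀) ^ 3) • (x t + x₀))
        - (mm / norm3 (x t - x₀) ^ 3) • (x t - x₀)) t) :
    ∀ s t : ℝ, eulerSym x₀ mp mm (x s) (y s) = eulerSym x₀ mp mm (x t) (y t) := by
  have hderiv (t : ℝ) : HasDerivAt (fun s => eulerSym x₀ mp mm (x s) (y s)) 0 t := by
    have hp : x t + x₀ ≠ 0 := fun h => (hcol t).1 (eq_neg_of_add_eq_zero_left h)
    have hm : x t - x₀ ≠ 0 := sub_ne_zero.2 (hcol t).2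
    exact (hasDerivAt_eulerSym (hx t) (hy t) hp hm).congr_deriv
      (eulerSymDeriv_twoCentreForce hp hm)
  exact fun s t => is_const_of_deriv_eq_zero (fun t => (hderiv t).differentiableAt)
    (fun t => (hderiv t).deriv) s t
end

section
/- The total angular momentum is a first integral of the enlarged two-centre system: let m > 0, ε ∈ ℝ, and let x, y, x', y' : ℝ → ℝ³ be differentiable with x(t) ∉ {0, x'(t)} for all t, satisfying ẋ = y/m, ẏ = −x/|x|³ + ε·(x' − x)/|x' − x|³, ẋ' = 0, and ẏ' = −ε·(x' − x)/|x' − x|³. Then the vector-valued function t ↦ x(t) × y(t) + x'(t) × y'(t) is constant. -/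
open scoped Matrix

/-!
Differentiating `C_t = x × y + x' × y'` along the flow gives
`ẋ × y + x × ẏ + ẋ' × y' + x' × ẏ'`. The first term is a multiple of `y × y`, the third vanishes,
the central force `x/|x|³` contributes a multiple of `x × x`, and the two coupling forces, which
are opposite, combine to `k (x − x') × (x' − x) = 0`. So `C_t` has zero derivative everywhere.
-/

theorem HasDerivAt.crossProduct {𝕜 : Type*} [NontriviallyNormedField 𝕜]
    {u v : 𝕜 → Fin 3 → 𝕜} {u' v' : Fin 3 → 𝕜} {t : 𝕜}
    (hu : HasDerivAt u u' t) (hv : HasDerivAt v v' t) :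
    HasDerivAt (fun s => u s ⨯₃ v s) (u' ⨯₃ v t + u t ⨯₃ v') t := by
  have hu_i := hasDerivAt_pi.mp hu
  have hv_i := hasDerivAt_pi.mp hv
  refine hasDerivAt_pi.mpr fun i => ?_
  simp only [cross_apply, Pi.add_apply]
  fin_cases i <;>
    simp only [Fin.zero_eta, Fin.mk_one, Fin.reduceFinMk, Matrix.cons_val_zero,
      Matrix.cons_val_one, Matrix.cons_val] <;>
    exact (((hu_i _).mul (hv_i _)).sub ((hu_i _).mul (hv_i _))).congr_deriv (by ring)

theorem cross_smul_self_add_cross_opposite_forces {R : Type*} [CommRing R]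
    (a b c : R) (x y x' : Fin 3 → R) :
    (a • y) ⨯₃ y + x ⨯₃ (-(b • x) + c • (x' - x)) + x' ⨯₃ (-(c • (x' - x))) = 0 := by
  have hcoupling : x ⨯₃ (x' - x) - x' ⨯₃ (x' - x) = 0 := by
    rw [← LinearMap.sub_apply, ← map_sub, ← neg_sub, map_neg, LinearMap.neg_apply, cross_self,
      neg_zero]
  simp only [map_smul, map_add, map_neg, LinearMap.smul_apply, cross_self, smul_zero, neg_zero,
    zero_add, ← sub_eq_add_neg, ← smul_sub, hcoupling]

theorem total_angular_momentum_conserved_general (m ε : ℝ)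
    (x y x' y' : ℝ → Fin 3 → ℝ)
    (hx : ∀ t, HasDerivAt x (m⁻¹ • y t) t)
    (hy : ∀ t, HasDerivAt y
      (-((norm3 (x t) ^ 3)⁻¹ • x t)
        + (ε / norm3 (x' t - x t) ^ 3) • (x' t - x t)) t)
    (hx' : ∀ t, HasDerivAt x' (0 : Fin 3 → ℝ) t)
    (hy' : ∀ t, HasDerivAt y'
      (-((ε / norm3 (x' t - x t) ^ 3) • (x' t - x t))) t) :
    ∀ s t : ℝ,
      x s ⨯₃ y s + x' s ⨯₃ y' s = x t ⨯₃ y t + x' t ⨯₃ y' t := by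
  have hC : ∀ t, HasDerivAt (fun s => x s ⨯₃ y s + x' s ⨯₃ y' s) 0 t := fun t => by
    refine (((hx t).crossProduct (hy t)).add ((hx' t).crossProduct (hy' t))).congr_deriv ?_
    rw [LinearMap.map_zero₂, zero_add, cross_smul_self_add_cross_opposite_forces]
  exact is_const_of_deriv_eq_zero (fun t => (hC t).differentiableAt) (fun t => (hC t).deriv)

/-- the total angular momentum `C_t = x × y + x' × y'` is a first
integral of the enlarged two-centre system, i.e. the Hamiltonian system of
`h(y', y, x', x) = |y|²/(2m) − 1/|x| − ε/|x'−x|` regarded as a function constant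
in `y'`: `ẋ = y/m`, `ẏ = −x/|x|³ + ε (x'−x)/|x'−x|³`, `ẋ' = 0`,
`ẏ' = −ε (x'−x)/|x'−x|³`. -/
theorem total_angular_momentum_conserved (m ε : ℝ) (hm : 0 < m)
    (x y x' y' : ℝ → Fin 3 → ℝ)
    (hcol : ∀ t, x t ≠ 0 ∧ x t ≠ x' t)
    (hx : ∀ t, HasDerivAt x (m⁻¹ • y t) t)
    (hy : ∀ t, HasDerivAt y
      (-((norm3 (x t) ^ 3)⁻¹ • x t)
        + (ε / norm3 (x' t - x t) ^ 3) • (x' t - x t)) t)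
    (hx' : ∀ t, HasDerivAt x' (0 : Fin 3 → ℝ) t)
    (hy' : ∀ t, HasDerivAt y'
      (-((ε / norm3 (x' t - x t) ^ 3) • (x' t - x t))) t) :
    ∀ s t : ℝ,
      x s ⨯₃ y s + x' s ⨯₃ y' s = x t ⨯₃ y t + x' t ⨯₃ y' t :=
  total_angular_momentum_conserved_general m ε x y x' y' hx hy hx' hy'
end

section
/- The point (π, 0) is the global minimum of Ĝ₀: for every Λ > 0 and δ > 0 and all g ∈ ℝ, G ∈ (−Λ, Λ), one has Ĝ₀(g, G) ≥ −δ, with equality if and only if G = 0 and cos g = −1. -/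
/-- The planar Euler integral normalized by `Λ²` (with `Θ = 0`):
`Ĝ₀(g, G) = G²/Λ² + δ √(1 − G²/Λ²) cos g`. -/
noncomputable def Ghat (Λ δ : ℝ) (g G : ℝ) : ℝ :=
  G ^ 2 / Λ ^ 2 + δ * Real.sqrt (1 - G ^ 2 / Λ ^ 2) * Real.cos g

/-!
With `x = G²/Λ² ≥ 0` and `s = √(1 - x) ∈ [0, 1]` one has
`Ĝ₀ + δ = x + δ (1 + s cos g)`, a sum of two nonnegative terms. It vanishes only if `x = 0`,
so that `s = 1`, and then `1 + cos g = 0`.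
-/

section

variable {x c δ : ℝ}

lemma one_add_sqrt_one_sub_mul_nonneg (hx : 0 ≤ x) (hc : -1 ≤ c) :
    0 ≤ 1 + √(1 - x) * c := by
  have hs : √(1 - x) ≤ 1 := Real.sqrt_le_one.mpr (by linarith)
  nlinarith [Real.sqrt_nonneg (1 - x)]

lemma neg_le_add_mul_sqrt_one_sub_mul (hx : 0 ≤ x) (hc : -1 ≤ c) (hδ : 0 ≤ δ) :
    -δ ≤ x + δ * √(1 - x) * c := by
  nlinarith [mul_nonneg hδ (one_add_sqrt_one_sub_mul_nonneg hx hc)]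

lemma add_mul_sqrt_one_sub_mul_eq_neg_iff (hx : 0 ≤ x) (hc : -1 ≤ c) (hδ : 0 < δ) :
    x + δ * √(1 - x) * c = -δ ↔ x = 0 ∧ c = -1 := by
  constructor
  · intro h
    have hsum : x + δ * (1 + √(1 - x) * c) = 0 := by linarith
    have hterm := mul_nonneg hδ.le (one_add_sqrt_one_sub_mul_nonneg hx hc)
    have hx0 : x = 0 := by linarith
    have hterm0 : 1 + √(1 - x) * c = 0 :=
      (mul_eq_zero.mp (show δ * (1 + √(1 - x) * c) = 0 by linarith)).resolve_left hδ.ne'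
    refine ⟨hx0, ?_⟩
    simpa [hx0] using eq_neg_of_add_eq_zero_right hterm0
  · rintro ⟨rfl, rfl⟩
    norm_num

end

theorem Ghat_global_min_general (Λ δ : ℝ) (hδ : 0 < δ) :
    ∀ g G : ℝ, G ∈ Set.Ioo (-Λ) Λ →
      -δ ≤ Ghat Λ δ g G ∧ (Ghat Λ δ g G = -δ ↔ G = 0 ∧ Real.cos g = -1) := by
  intro g G hG
  have hΛ : Λ ≠ 0 := (neg_lt_self_iff.mp (hG.1.trans hG.2)).ne'
  have hx : 0 ≤ G ^ 2 / Λ ^ 2 := by positivity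
  refine ⟨neg_le_add_mul_sqrt_one_sub_mul hx (Real.neg_one_le_cos g) hδ.le, ?_⟩
  rw [Ghat, add_mul_sqrt_one_sub_mul_eq_neg_iff hx (Real.neg_one_le_cos g) hδ]
  simp [hΛ]

/-- `(π, 0)` is the global minimum of `Ĝ₀`: for all `g ∈ ℝ` and
`G ∈ (−Λ, Λ)` one has `Ĝ₀(g,G) ≥ −δ`, with equality iff `G = 0` and `cos g = −1`. -/
theorem Ghat_global_min (Λ δ : ℝ) (hΛ : 0 < Λ) (hδ : 0 < δ) :
    ∀ g G : ℝ, G ∈ Set.Ioo (-Λ) Λ →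
      -δ ≤ Ghat Λ δ g G ∧ (Ghat Λ δ g G = -δ ↔ G = 0 ∧ Real.cos g = -1) :=
  Ghat_global_min_general Λ δ hδ
end

section
/- Existence criterion for points of the level set: let Λ > 0, δ > 0, −δ ≤ c < 1 and g ∈ ℝ. Then there exists G ∈ [0, Λ) with Ĝ₀(g, G) = c if and only if cos g ≤ c/δ. In particular, if δ < c < 1 (so c/δ > 1), then for every g ∈ ℝ such a G exists, corresponding to rotational motion of g, while if −δ ≤ c < δ such points exist only for those g with cos g ≤ c/δ, corresponding to librational motion around (π, 0). -/
/-- existence criterion for points of the level set `{Ĝ₀ = c}`: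
for `Λ > 0`, `δ > 0`, `−δ ≤ c < 1` and `g ∈ ℝ`, there is `G ∈ [0, Λ)` with
`Ĝ₀(g,G) = c` iff `cos g ≤ c/δ`.  In particular for `δ < c < 1` such a `G`
exists for every `g` (rotational motion of `g`). -/
theorem Ghat_level_exists (Λ δ c : ℝ) (hΛ : 0 < Λ) (hδ : 0 < δ)
    (hc1 : -δ ≤ c) (hc2 : c < 1) :
    (∀ g : ℝ,
      (∃ G ∈ Set.Ico (0 : ℝ) Λ, Ghat Λ δ g G = c) ↔ Real.cos g ≤ c / δ) ∧
    (δ < c → ∀ g : ℝ, ∃ G ∈ Set.Ico (0 : ℝ) Λ, Ghat Λ δ g G = c) := by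
  have main : ∀ g : ℝ,
      (∃ G ∈ Set.Ico (0 : ℝ) Λ, Ghat Λ δ g G = c) ↔ Real.cos g ≤ c / δ := by
    intro g
    constructor
    · rintro ⟨G, ⟨hG0, hGΛ⟩, heq⟩
      rw [le_div_iff₀ hδ]
      by_contra hcon
      push_neg at hcon
      set x : ℝ := G ^ 2 / Λ ^ 2 with hx
      have hx0 : 0 ≤ x := by positivity
      have hx1 : x < 1 := by
        rw [hx, div_lt_one (by positivity)]
        nlinarith
      set t : ℝ := Real.sqrt (1 - x) with htdef
      have ht2 : t ^ 2 = 1 - x := Real.sq_sqrt (by linarith)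
      have ht0 : 0 < t := Real.sqrt_pos.2 (by linarith)
      have ht1 : t ≤ 1 := by nlinarith
      have heq' : x + δ * t * Real.cos g = c := heq
      have hmc : Real.cos g * δ > c := hcon
      nlinarith [mul_pos ht0 (sub_pos.2 hcon), sq_nonneg (1 - t)]
    · intro hcg
      have hcg' : δ * Real.cos g ≤ c := by
        rw [le_div_iff₀ hδ] at hcg; linarith [hcg]
      have hcont : ContinuousOn (fun G => Ghat Λ δ g G) (Set.Icc 0 Λ) := by
        apply Continuous.continuousOn
        unfold Ghat
        continuity
      have h0 : Ghat Λ δ g 0 = δ * Real.cos g := by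
        simp [Ghat]
      have hΛv : Ghat Λ δ g Λ = 1 := by
        have : (Λ : ℝ) ^ 2 / Λ ^ 2 = 1 := div_self (by positivity)
        simp [Ghat, this]
      have := intermediate_value_Icc hΛ.le hcont
      have hc : c ∈ Set.Icc (Ghat Λ δ g 0) (Ghat Λ δ g Λ) := by
        rw [h0, hΛv]; exact ⟨hcg', hc2.le⟩
      obtain ⟨G, hGmem, hGval⟩ := this hc
      refine ⟨G, ⟨hGmem.1, ?_⟩, hGval⟩
      rcases lt_or_eq_of_le hGmem.2 with h | h
      · exact h
      · exfalso; simp only [h, hΛv] at hGval; linarith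
  exact ⟨main, fun hδc g => (main g).2 (le_trans (Real.cos_le_one g)
    (le_of_lt ((one_lt_div hδ).2 hδc)))⟩
end

section
/- Uniqueness on rotational levels: let Λ > 0, 0 < δ < 1 and δ < c < 1. Then for every g ∈ ℝ there exists a unique G ∈ (0, Λ) such that Ĝ₀(g, G) = c. -/
set_option maxHeartbeats 1000000

/-- uniqueness on rotational levels: for `Λ > 0`, `0 < δ < 1` and
`δ < c < 1`, for every `g ∈ ℝ` there is a unique `G ∈ (0, Λ)` with `Ĝ₀(g,G) = c`. -/
theorem Ghat_level_unique (Λ δ c : ℝ) (hΛ : 0 < Λ) (hδ0 : 0 < δ) (hδ1 : δ < 1)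
    (hc1 : δ < c) (hc2 : c < 1) :
    ∀ g : ℝ, ∃! G : ℝ, G ∈ Set.Ioo (0 : ℝ) Λ ∧ Ghat Λ δ g G = c := by
  intro g
  set k : ℝ := δ * Real.cos g with hkdef
  clear_value k
  have hcos1 : Real.cos g ≤ 1 := Real.cos_le_one g
  have hcos2 : -1 ≤ Real.cos g := Real.neg_one_le_cos g
  have hk1 : k ≤ δ := by nlinarith
  have hk2 : -δ ≤ k := by nlinarith
  have hkc : k < c := lt_of_le_of_lt hk1 hc1
  set D : ℝ := k ^ 2 + 4 * (1 - c) with hDdef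
  clear_value D
  have hD0 : 0 < D := by nlinarith
  have hsD : Real.sqrt D ^ 2 = D := Real.sq_sqrt hD0.le
  have hsDpos : 0 < Real.sqrt D := Real.sqrt_pos.mpr hD0
  have hsDk : |k| < Real.sqrt D := by
    have : Real.sqrt (k ^ 2) < Real.sqrt D := Real.sqrt_lt_sqrt (sq_nonneg k) (by nlinarith)
    rwa [Real.sqrt_sq_eq_abs] at this
  set t : ℝ := (k + Real.sqrt D) / 2 with htdef
  clear_value t
  have ht0 : 0 < t := by
    have := neg_abs_le k
    simp only [htdef]; nlinarith
  have ht1 : t < 1 := by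
    have h2k : 0 < 2 - k := by nlinarith [abs_nonneg k, neg_abs_le k, le_abs_self k]
    have : Real.sqrt D < 2 - k := by
      rw [Real.sqrt_lt' h2k]
      nlinarith
    simp only [htdef]; nlinarith
  have htq : t ^ 2 - k * t = 1 - c := by
    simp only [htdef]; nlinarith [hsD]
  -- the existence witness
  set G₀ : ℝ := Λ * Real.sqrt (1 - t ^ 2) with hG₀def
  clear_value G₀
  have h1t : 0 < 1 - t ^ 2 := by nlinarith
  have hst : Real.sqrt (1 - t ^ 2) ^ 2 = 1 - t ^ 2 := Real.sq_sqrt h1t.le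
  have hstpos : 0 < Real.sqrt (1 - t ^ 2) := Real.sqrt_pos.mpr h1t
  have hstlt : Real.sqrt (1 - t ^ 2) < 1 := by
    rw [Real.sqrt_lt' one_pos]
    nlinarith
  have hG₀pos : 0 < G₀ := by rw [hG₀def]; exact mul_pos hΛ hstpos
  have hG₀lt : G₀ < Λ := by
    have h := mul_lt_mul_of_pos_left hstlt hΛ
    simpa [hG₀def] using h
  have hG₀sq : G₀ ^ 2 / Λ ^ 2 = 1 - t ^ 2 := by
    rw [hG₀def, mul_pow, hst, mul_comm, mul_div_assoc,
      div_self (by positivity : (Λ : ℝ) ^ 2 ≠ 0), mul_one]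
  have hG₀val : Ghat Λ δ g G₀ = c := by
    unfold Ghat
    rw [hG₀sq, show (1 : ℝ) - (1 - t ^ 2) = t ^ 2 by ring, Real.sqrt_sq ht0.le]
    have hk' : δ * t * Real.cos g = k * t := by rw [hkdef]; ring
    linarith [htq, hk']
  refine ⟨G₀, ⟨⟨hG₀pos, hG₀lt⟩, hG₀val⟩, ?_⟩
  rintro G ⟨⟨hGpos, hGlt⟩, hGval⟩
  set s : ℝ := Real.sqrt (1 - G ^ 2 / Λ ^ 2) with hsdef
  clear_value s
  have hΛ2 : 0 < Λ ^ 2 := by positivity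
  have hG2lt : G ^ 2 / Λ ^ 2 < 1 := by
    rw [div_lt_one hΛ2]
    gcongr

  have hs2 : s ^ 2 = 1 - G ^ 2 / Λ ^ 2 := by rw [hsdef]; exact Real.sq_sqrt (by linarith)
  have hspos : 0 < s := by rw [hsdef]; exact Real.sqrt_pos.mpr (by linarith)
  have hseq : s ^ 2 - k * s = 1 - c := by
    unfold Ghat at hGval
    rw [← hsdef] at hGval
    have hk'' : k * s = δ * s * Real.cos g := by rw [hkdef]; ring
    linarith [hs2, hGval, hk'']
  have hsk : k < s := by
    by_contra h
    push_neg at h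
    have hnp : s * (s - k) ≤ 0 := mul_nonpos_of_nonneg_of_nonpos hspos.le (by linarith)
    have : s ^ 2 - k * s = s * (s - k) := by ring
    linarith [hseq]
  have hst' : s = t := by
    have hfac : (s - t) * (s + t - k) = 0 := by linear_combination hseq - htq
    have hpos : 0 < s + t - k := by linarith
    rcases mul_eq_zero.mp hfac with h | h
    · linarith
    · linarith
  have hGsq : G ^ 2 = G₀ ^ 2 := by
    have h1 : G ^ 2 / Λ ^ 2 = 1 - t ^ 2 := by rw [← hst']; linarith [hs2]
    have h2 : G ^ 2 = Λ ^ 2 * (1 - t ^ 2) := by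
      field_simp at h1; linarith
    have h3 : G₀ ^ 2 = Λ ^ 2 * (1 - t ^ 2) := by rw [hG₀def, mul_pow, hst]
    rw [h2, h3]
  have habs : |G| = |G₀| := by
    rw [← Real.sqrt_sq_eq_abs, ← Real.sqrt_sq_eq_abs, hGsq]
  rwa [abs_of_pos hGpos, abs_of_pos hG₀pos] at habs
end

section
/- The explicit homoclinic curve lies on the separatrix level Ĝ₀ = δ: let Λ > 0, 0 < δ < 1, t₀ ∈ ℝ, and set σ = √(δ(2 − δ)), β = √(2 − δ). For t ∈ ℝ put τ = σΛ(t − t₀), G(t) = σΛ/cosh τ, and C(t) = (1 − β²/cosh²τ)/√(1 − σ²/cosh²τ). Then for all t: (i) 0 < 1 − σ²/cosh²τ, (ii) |C(t)| ≤ 1 (so C(t) = cos g(t) for a well-defined angle g(t)), and (iii) G(t)²/Λ² + δ·√(1 − G(t)²/Λ²)·C(t) = δ. -/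
/-!
Write `c = cosh² τ ≥ 1`. Then `G²/Λ² = σ²/c = δ(2-δ)/c`, so the radicand is `1 - δ(2-δ)/c`, positive
because `δ(2-δ) = 1 - (1-δ)² < 1`. The numerator of `C` satisfies
`(1 - (2-δ)/c)² = 1 - δ(2-δ)/c - (2-δ)² (c-1)/c²`, which gives `|C| ≤ 1`; and on the level set
the square root cancels against the denominator of `C`, leaving `δ(2-δ)/c + δ(1 - (2-δ)/c) = δ`.
-/

open Real

lemma sq_one_sub_div_le (δ : ℝ) {c : ℝ} (hc : 1 ≤ c) :
    (1 - (2 - δ) / c) ^ 2 ≤ 1 - δ * (2 - δ) / c := by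
  have hc0 : 0 < c := by linarith
  have key : 1 - δ * (2 - δ) / c - (1 - (2 - δ) / c) ^ 2 = (2 - δ) ^ 2 * (c - 1) / c ^ 2 := by
    field_simp
    ring
  have : 0 ≤ (2 - δ) ^ 2 * (c - 1) / c ^ 2 := by
    have : 0 ≤ c - 1 := by linarith
    positivity
  linarith

lemma abs_div_sqrt_le_one {a b : ℝ} (h : a ^ 2 ≤ b) (hb : 0 < b) : |a / √b| ≤ 1 := by
  rw [abs_div, abs_of_pos (sqrt_pos.2 hb), div_le_one (sqrt_pos.2 hb)]
  exact abs_le_sqrt h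

/-- the explicit homoclinic curve lies on the separatrix level
`Ĝ₀ = δ`: with `σ = √(δ(2−δ))`, `β = √(2−δ)`, `τ = σΛ(t−t₀)`,
`G(t) = σΛ/cosh τ` and `C(t) = (1 − β²/cosh²τ)/√(1 − σ²/cosh²τ)`, one has
(i) `0 < 1 − σ²/cosh²τ`, (ii) `|C(t)| ≤ 1` (so `C(t) = cos g(t)` for a
well-defined angle `g(t)`), and (iii) `G(t)²/Λ² + δ √(1 − G(t)²/Λ²) C(t) = δ`. -/
theorem homoclinic_on_separatrix (Λ δ t₀ : ℝ) (hΛ : 0 < Λ) (hδ0 : 0 < δ) (hδ1 : δ < 1) :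
    let σ := Real.sqrt (δ * (2 - δ))
    let β := Real.sqrt (2 - δ)
    ∀ t : ℝ,
      let τ := σ * Λ * (t - t₀)
      let G := σ * Λ / Real.cosh τ
      let C := (1 - β ^ 2 / Real.cosh τ ^ 2) / Real.sqrt (1 - σ ^ 2 / Real.cosh τ ^ 2)
      0 < 1 - σ ^ 2 / Real.cosh τ ^ 2 ∧
      |C| ≤ 1 ∧ (∃ g : ℝ, Real.cos g = C) ∧
      G ^ 2 / Λ ^ 2 + δ * Real.sqrt (1 - G ^ 2 / Λ ^ 2) * C = δ := by
  intro σ β t τ G C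
  have hσ : σ ^ 2 = δ * (2 - δ) := sq_sqrt (by nlinarith)
  have hβ : β ^ 2 = 2 - δ := sq_sqrt (by linarith)
  have hc : 1 ≤ cosh τ ^ 2 := one_le_pow₀ (one_le_cosh τ)
  have hS : 0 < 1 - σ ^ 2 / cosh τ ^ 2 := by
    have : σ ^ 2 < cosh τ ^ 2 := by nlinarith [sq_pos_of_ne_zero (sub_ne_zero.2 hδ1.ne')]
    exact sub_pos.2 ((div_lt_one (by linarith)).2 this)
  have hC : |C| ≤ 1 := abs_div_sqrt_le_one (by rw [hσ, hβ]; exact sq_one_sub_div_le δ hc) hS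
  refine ⟨hS, hC, ⟨arccos C, cos_arccos (abs_le.1 hC).1 (abs_le.1 hC).2⟩, ?_⟩
  have hG : G ^ 2 / Λ ^ 2 = σ ^ 2 / cosh τ ^ 2 := by
    simp only [G]
    field_simp
  rw [hG, mul_assoc, mul_div_cancel₀ _ (sqrt_pos.2 hS).ne', hσ, hβ]
  field_simp
  ring
end

section
/- (Lemma, part (ii)): Let n ≥ 0, ε₀ > 0, let V ⊆ ℝ be open and B ⊆ ℝ^{2n} be open and connected, and let the phase space be P = V × ℝ × B with canonical coordinates (I, φ, p, q), φ being an angle (all functions below are 2π-periodic in φ). Let 𝓗, 𝓙 : P × (−ε₀, ε₀) → ℝ be smooth, analytic in ε with convergent expansions 𝓗 = Σ_{k≥0} εᵏ 𝓗ₖ(I, φ, p, q) and 𝓙 = Σ_{k≥0} εᵏ 𝓙ₖ(I, φ, p, q) on (−ε₀, ε₀). Assume: (a) 𝓗 is independent of φ; (b) 𝓗₀ depends only on I, and ∂𝓗₀/∂I ≠ 0 on V; (c) for every ε ∈ (−ε₀, ε₀), the Poisson bracket {𝓗(·,ε), 𝓙(·,ε)} vanishes identically on P; (d) 𝓙₀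 is independent of φ. Then 𝓙ₖ is independent of φ for every k ≥ 0; consequently 𝓙(·, ε) is independent of φ for every ε ∈ (−ε₀, ε₀). -/
open scoped ContDiff ENNReal NNReal
open Set Filter FormalMultilinearSeries

open scoped ContDiff
open Set Filter
section
variable {s : Set ℝ} {x : ℝ}

lemma aux_iteratedDeriv_zero_fun (k : ℕ) (x : ℝ) :
    iteratedDeriv k (fun _ : ℝ => (0:ℝ)) x = 0 := by
  have h : (deriv (fun _ : ℝ => (0:ℝ))) = (fun _ : ℝ => (0:ℝ)) := by
    funext y; simp
  rw [iteratedDeriv_eq_iterate, Function.iterate_fixed h]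

lemma aux_iteratedDerivWithin_of_isOpen {f : ℝ → ℝ}
    (hs : IsOpen s) (hx : x ∈ s) (n : ℕ) :
    iteratedDerivWithin n f s x = iteratedDeriv n f x := by
  rw [iteratedDerivWithin, iteratedDeriv, iteratedFDerivWithin_of_isOpen n hs hx]

lemma aux_iteratedDeriv_add {f g : ℝ → ℝ}
    (hs : IsOpen s) (hx : x ∈ s)
    (hf : ContDiffOn ℝ (⊤ : ℕ∞) f s) (hg : ContDiffOn ℝ (⊤ : ℕ∞) g s) (n : ℕ) :
    iteratedDeriv n (fun y => f y + g y) x = iteratedDeriv n f x + iteratedDeriv n g x := by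
  rw [← aux_iteratedDerivWithin_of_isOpen hs hx (f := fun y => f y + g y),
    ← aux_iteratedDerivWithin_of_isOpen hs hx (f := f), ← aux_iteratedDerivWithin_of_isOpen hs hx (f := g)]
  exact iteratedDerivWithin_add hx hs.uniqueDiffOn ((hf x hx).of_le (by exact_mod_cast le_top)) ((hg x hx).of_le (by exact_mod_cast le_top))

lemma aux_iteratedDeriv_sub {f g : ℝ → ℝ}
    (hs : IsOpen s) (hx : x ∈ s)
    (hf : ContDiffOn ℝ (⊤ : ℕ∞) f s) (hg : ContDiffOn ℝ (⊤ : ℕ∞) g s) (n : ℕ) :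
    iteratedDeriv n (fun y => f y - g y) x = iteratedDeriv n f x - iteratedDeriv n g x := by
  rw [← aux_iteratedDerivWithin_of_isOpen hs hx (f := fun y => f y - g y),
    ← aux_iteratedDerivWithin_of_isOpen hs hx (f := f), ← aux_iteratedDerivWithin_of_isOpen hs hx (f := g)]
  exact iteratedDerivWithin_sub hx hs.uniqueDiffOn ((hf x hx).of_le (by exact_mod_cast le_top)) ((hg x hx).of_le (by exact_mod_cast le_top))

lemma aux_iteratedDeriv_finsum {ι : Type*} (t : Finset ι) {F : ι → ℝ → ℝ}
    (hs : IsOpen s) (hx : x ∈ s)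
    (hF : ∀ i ∈ t, ContDiffOn ℝ (⊤ : ℕ∞) (F i) s) (n : ℕ) :
    iteratedDeriv n (fun y => ∑ i ∈ t, F i y) x = ∑ i ∈ t, iteratedDeriv n (F i) x := by
  classical
  induction t using Finset.induction with
  | empty => simpa using aux_iteratedDeriv_zero_fun n x
  | insert a t' hnotmem ih =>
    have h1 : ContDiffOn ℝ (⊤ : ℕ∞) (F a) s := hF a (Finset.mem_insert_self a t')
    have h2 : ContDiffOn ℝ (⊤ : ℕ∞) (fun y => ∑ i ∈ t', F i y) s := by
      apply ContDiffOn.sum; intro i hi; exact hF i (Finset.mem_insert_of_mem hi)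
    have e1 : (fun y => ∑ i ∈ insert a t', F i y) = (fun y => F a y + ∑ i ∈ t', F i y) := by
      funext y; rw [Finset.sum_insert hnotmem]
    rw [e1, aux_iteratedDeriv_add hs hx h1 h2,
      ih (fun i hi => hF i (Finset.mem_insert_of_mem hi)), Finset.sum_insert hnotmem]
end


lemma aux_choose_juggle (a b : ℕ → ℝ) (k : ℕ) :
    ∑ j ∈ Finset.range (k+1), (k.choose j : ℝ) * (a (j+1) * b (k-j))
      + ∑ j ∈ Finset.range (k+1), (k.choose j : ℝ) * (a j * b (k-j+1))
    = ∑ j ∈ Finset.range (k+2), ((k+1).choose j : ℝ) * (a j * b (k+1-j)) := by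
  have hR : ∑ j ∈ Finset.range (k+2), ((k+1).choose j : ℝ) * (a j * b (k+1-j))
      = (∑ j ∈ Finset.range (k+1), ((k+1).choose (j+1) : ℝ) * (a (j+1) * b (k-j)))
        + a 0 * b (k+1) := by
    rw [Finset.sum_range_succ' (fun j => ((k+1).choose j : ℝ) * (a j * b (k+1-j))) (k+1)]
    simp only [Nat.choose_zero_right, Nat.cast_one, one_mul, Nat.sub_zero]
    congr 1
    exact Finset.sum_congr rfl fun j hj => by
      have h : k + 1 - (j+1) = k - j := by omega
      rw [h]
  have hL2 : ∑ j ∈ Finset.range (k+1), (k.choose j : ℝ) * (a j * b (k-j+1))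
      = (∑ j ∈ Finset.range (k+1), (k.choose (j+1) : ℝ) * (a (j+1) * b (k-j)))
        + a 0 * b (k+1) := by
    rw [Finset.sum_range_succ' (fun j => (k.choose j : ℝ) * (a j * b (k-j+1))) k]
    simp only [Nat.choose_zero_right, Nat.cast_one, one_mul, Nat.sub_zero]
    rw [Finset.sum_range_succ]
    simp only [Nat.choose_succ_self, Nat.cast_zero, zero_mul, add_zero]
    congr 1
    exact Finset.sum_congr rfl fun j hj => by
      have hj' : j < k := Finset.mem_range.mp hj
      have h : k - (j+1) + 1 = k - j := by omega
      rw [h]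
  rw [hL2, hR, ← add_assoc, ← Finset.sum_add_distrib]
  congr 1
  exact Finset.sum_congr rfl fun j hj => by
    have hpascal : ((k+1).choose (j+1) : ℝ) = (k.choose j : ℝ) + (k.choose (j+1) : ℝ) := by
      rw [Nat.choose_succ_succ]; push_cast; ring
    rw [hpascal]; ring

lemma aux_iteratedDeriv_mul {s : Set ℝ} (hs : IsOpen s) (k : ℕ) :
    ∀ (f g : ℝ → ℝ), ContDiffOn ℝ (⊤ : ℕ∞) f s → ContDiffOn ℝ (⊤ : ℕ∞) g s → ∀ x ∈ s,
    iteratedDeriv k (fun y => f y * g y) x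
      = ∑ j ∈ Finset.range (k+1), (k.choose j : ℝ) * (iteratedDeriv j f x * iteratedDeriv (k-j) g x) := by
  induction k with
  | zero => intro f g hf hg x hx; simp
  | succ k ih =>
    intro f g hf hg x hx
    have hf' : ContDiffOn ℝ (⊤ : ℕ∞) (deriv f) s := hf.deriv_of_isOpen hs (by simp)
    have hg' : ContDiffOn ℝ (⊤ : ℕ∞) (deriv g) s := hg.deriv_of_isOpen hs (by simp)
    have hstep : iteratedDeriv (k+1) (fun y => f y * g y) x
        = iteratedDeriv k (fun y => deriv f y * g y + f y * deriv g y) x := by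
      rw [iteratedDeriv_succ']
      exact Set.EqOn.iteratedDeriv_of_isOpen (fun y hy => by
        have hfd : DifferentiableAt ℝ f y :=
          (hf.contDiffAt (hs.mem_nhds hy)).differentiableAt (by simp)
        have hgd : DifferentiableAt ℝ g y :=
          (hg.contDiffAt (hs.mem_nhds hy)).differentiableAt (by simp)
        exact deriv_mul hfd hgd) hs k hx
    rw [hstep, aux_iteratedDeriv_add hs hx
      ((hf'.mul hg)) ((hf.mul hg')) k,
      ih (deriv f) g hf' hg x hx, ih f (deriv g) hf hg' x hx]
    -- binomial juggling
    have e1 : ∀ j, iteratedDeriv j (deriv f) x = iteratedDeriv (j+1) f x := by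
      intro j; rw [iteratedDeriv_succ']
    have e2 : ∀ j, iteratedDeriv j (deriv g) x = iteratedDeriv (j+1) g x := by
      intro j; rw [iteratedDeriv_succ']
    simp only [e1, e2]
    exact aux_choose_juggle (fun j => iteratedDeriv j f x) (fun j => iteratedDeriv j g x) k


lemma aux_hasFPowerSeries {ε₀ : ℝ} (hε₀ : 0 < ε₀) {c : ℕ → ℝ} {f : ℝ → ℝ}
    (hf : ∀ ε : ℝ, |ε| < ε₀ → HasSum (fun k => ε ^ k * c k) (f ε)) :
    HasFPowerSeriesOnBall f (ofScalars ℝ c) 0 (ENNReal.ofReal ε₀) := by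
  constructor
  · apply ENNReal.le_of_forall_nnreal_lt
    intro r hr
    have hrε : (r : ℝ) < ε₀ := by
      have := (ENNReal.lt_ofReal_iff_toReal_lt (a := (r : ℝ≥0∞)) (by simp)).mp hr
      simpa using this
    have hsum := hf r (by rw [abs_of_nonneg (r.coe_nonneg)]; exact hrε)
    have hten : Tendsto (fun k => (r:ℝ) ^ k * c k) atTop (nhds 0) :=
      hsum.summable.tendsto_atTop_zero
    apply FormalMultilinearSeries.le_radius_of_tendsto _ (l := 0)
    have : (fun k => ‖ofScalars ℝ c k‖ * (r:ℝ) ^ k) = fun k => |(r:ℝ) ^ k * c k| := by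
      funext k
      rw [ofScalars_norm, Real.norm_eq_abs, abs_mul, abs_of_nonneg (pow_nonneg r.coe_nonneg k)]
      ring
    rw [this]
    simpa using hten.abs
  · simpa using hε₀
  · intro y hy
    have hy' : |y| < ε₀ := by
      rw [EMetric.mem_ball, edist_zero_right] at hy
      have := (ENNReal.lt_ofReal_iff_toReal_lt (a := (‖y‖₊ : ℝ≥0∞)) (by simp)).mp hy
      simpa [Real.norm_eq_abs] using this
    have := hf y hy'
    simp only [zero_add]
    convert this using 1
    · rfl
    funext k
    rw [ofScalars_apply_eq]
    simp [smul_eq_mul]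
    ring
  
lemma aux_iteratedDeriv_of_hasSum {ε₀ : ℝ} (hε₀ : 0 < ε₀) {c : ℕ → ℝ} {f : ℝ → ℝ}
    (hf : ∀ ε : ℝ, |ε| < ε₀ → HasSum (fun k => ε ^ k * c k) (f ε)) (k : ℕ) :
    iteratedDeriv k f 0 = (k.factorial : ℝ) * c k := by
  have hball := aux_hasFPowerSeries hε₀ hf
  have h := hball.factorial_smul (1 : ℝ) k
  rw [ofScalars_apply_eq] at h
  simp only [one_pow, smul_eq_mul, one_mul, nsmul_eq_mul] at h
  rw [iteratedDeriv_eq_iteratedFDeriv]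
  rw [← h]; ring


section TwoVar

variable {g : ℝ → ℝ → ℝ} {U : Set (ℝ × ℝ)}

lemma aux_hasDerivAt_fst (hU : IsOpen U)
    (hg : ContDiffOn ℝ (⊤ : ℕ∞) (fun z : ℝ × ℝ => g z.1 z.2) U) {z : ℝ × ℝ} (hz : z ∈ U) :
    HasDerivAt (fun x => g x z.2)
      (fderiv ℝ (fun w : ℝ × ℝ => g w.1 w.2) z ((1:ℝ), (0:ℝ))) z.1 := by
  have hd : DifferentiableAt ℝ (fun w : ℝ × ℝ => g w.1 w.2) z :=
    (hg.contDiffAt (hU.mem_nhds hz)).differentiableAt (by simp)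
  have hcurve : HasDerivAt (fun x : ℝ => ((x, z.2) : ℝ × ℝ)) (((1:ℝ), (0:ℝ)) : ℝ × ℝ) z.1 :=
    (hasDerivAt_id z.1).prodMk (hasDerivAt_const z.1 z.2)
  exact hd.hasFDerivAt.comp_hasDerivAt z.1 hcurve

lemma aux_hasDerivAt_snd (hU : IsOpen U)
    (hg : ContDiffOn ℝ (⊤ : ℕ∞) (fun z : ℝ × ℝ => g z.1 z.2) U) {z : ℝ × ℝ} (hz : z ∈ U) :
    HasDerivAt (fun y => g z.1 y)
      (fderiv ℝ (fun w : ℝ × ℝ => g w.1 w.2) z ((0:ℝ), (1:ℝ))) z.2 := by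
  have hd : DifferentiableAt ℝ (fun w : ℝ × ℝ => g w.1 w.2) z :=
    (hg.contDiffAt (hU.mem_nhds hz)).differentiableAt (by simp)
  have hcurve : HasDerivAt (fun y : ℝ => ((z.1, y) : ℝ × ℝ)) (((0:ℝ), (1:ℝ)) : ℝ × ℝ) z.2 :=
    (hasDerivAt_const z.2 z.1).prodMk (hasDerivAt_id z.2)
  exact hd.hasFDerivAt.comp_hasDerivAt z.2 hcurve

lemma aux_contDiffOn_fderiv_apply (hU : IsOpen U)
    (hg : ContDiffOn ℝ (⊤ : ℕ∞) (fun z : ℝ × ℝ => g z.1 z.2) U) (v : ℝ × ℝ) :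
    ContDiffOn ℝ (⊤ : ℕ∞) (fun z => fderiv ℝ (fun w : ℝ × ℝ => g w.1 w.2) z v) U := by
  have h1 : ContDiffOn ℝ (⊤ : ℕ∞) (fderivWithin ℝ (fun w : ℝ × ℝ => g w.1 w.2) U) U :=
    hg.fderivWithin hU.uniqueDiffOn (by simp)
  have h2 : ContDiffOn ℝ (⊤ : ℕ∞) (fderiv ℝ (fun w : ℝ × ℝ => g w.1 w.2)) U :=
    h1.congr fun z hz => (fderivWithin_of_isOpen hU hz).symm
  exact h2.clm_apply contDiffOn_const

lemma aux_contDiffOn_d1 (hU : IsOpen U)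
    (hg : ContDiffOn ℝ (⊤ : ℕ∞) (fun z : ℝ × ℝ => g z.1 z.2) U) :
    ContDiffOn ℝ (⊤ : ℕ∞) (fun z : ℝ × ℝ => deriv (fun x => g x z.2) z.1) U :=
  (aux_contDiffOn_fderiv_apply hU hg ((1:ℝ), (0:ℝ))).congr fun z hz =>
    (aux_hasDerivAt_fst hU hg hz).deriv

lemma aux_contDiffOn_d2 (hU : IsOpen U)
    (hg : ContDiffOn ℝ (⊤ : ℕ∞) (fun z : ℝ × ℝ => g z.1 z.2) U) :
    ContDiffOn ℝ (⊤ : ℕ∞) (fun z : ℝ × ℝ => deriv (fun y => g z.1 y) z.2) U :=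
  (aux_contDiffOn_fderiv_apply hU hg ((0:ℝ), (1:ℝ))).congr fun z hz =>
    (aux_hasDerivAt_snd hU hg hz).deriv

lemma aux_contDiffOn_d1_slice {U₁ U₂ : Set ℝ} (h1 : IsOpen U₁) (h2 : IsOpen U₂)
    (hg : ContDiffOn ℝ (⊤ : ℕ∞) (fun z : ℝ × ℝ => g z.1 z.2) (U₁ ×ˢ U₂))
    {a : ℝ} (ha : a ∈ U₁) :
    ContDiffOn ℝ (⊤ : ℕ∞) (fun y => deriv (fun x => g x y) a) U₂ := by
  have := (aux_contDiffOn_d1 (h1.prod h2) hg).comp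
    ((contDiff_const.prodMk contDiff_id).contDiffOn (s := U₂))
    (fun y hy => Set.mk_mem_prod ha hy)
  exact this

lemma aux_schwarz (hU : IsOpen U)
    (hg : ContDiffOn ℝ (⊤ : ℕ∞) (fun z : ℝ × ℝ => g z.1 z.2) U)
    {a b : ℝ} (hz : (a, b) ∈ U) :
    deriv (fun x => deriv (fun y => g x y) b) a
      = deriv (fun y => deriv (fun x => g x y) a) b := by
  set G := fun w : ℝ × ℝ => g w.1 w.2 with hG
  have hG2 : ContDiffAt ℝ (⊤ : ℕ∞) G (a, b) := hg.contDiffAt (hU.mem_nhds hz)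
  have hf' : ContDiffAt ℝ (⊤ : ℕ∞) (fderiv ℝ G) (a, b) := hG2.fderiv_right (by simp)
  have hDf : HasFDerivAt (fderiv ℝ G) (fderiv ℝ (fderiv ℝ G) (a, b)) (a, b) :=
    (hf'.differentiableAt (by simp)).hasFDerivAt
  have hsym : IsSymmSndFDerivAt ℝ G (a, b) := hG2.isSymmSndFDerivAt (by rw [minSmoothness_of_isRCLikeNormedField]; exact WithTop.coe_le_coe.mpr le_top)
  -- left side
  have hL : HasDerivAt (fun x => deriv (fun y => g x y) b)
      (fderiv ℝ (fderiv ℝ G) (a, b) ((1:ℝ), (0:ℝ)) ((0:ℝ), (1:ℝ))) a := by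
    have hcurve : HasDerivAt (fun x : ℝ => ((x, b) : ℝ × ℝ)) (((1:ℝ), (0:ℝ)) : ℝ × ℝ) a :=
      (hasDerivAt_id a).prodMk (hasDerivAt_const a b)
    have h2 : HasDerivAt (fun x => fderiv ℝ G (x, b))
        (fderiv ℝ (fderiv ℝ G) (a, b) ((1:ℝ), (0:ℝ))) a :=
      hDf.comp_hasDerivAt a hcurve
    have h3 : HasDerivAt (fun x => fderiv ℝ G (x, b) ((0:ℝ), (1:ℝ)))
        (fderiv ℝ (fderiv ℝ G) (a, b) ((1:ℝ), (0:ℝ)) ((0:ℝ), (1:ℝ))) a := by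
      have := h2.clm_apply (hasDerivAt_const a (((0:ℝ), (1:ℝ)) : ℝ × ℝ))
      simpa using this
    apply h3.congr_of_eventuallyEq
    have hop : {x : ℝ | (x, b) ∈ U} ∈ nhds a := by
      have : Continuous (fun x : ℝ => ((x, b) : ℝ × ℝ)) := by fun_prop
      exact this.isOpen_preimage U hU |>.mem_nhds hz
    filter_upwards [hop] with x hx
    exact (aux_hasDerivAt_snd hU hg hx).deriv
  -- right side
  have hR : HasDerivAt (fun y => deriv (fun x => g x y) a)
      (fderiv ℝ (fderiv ℝ G) (a, b) ((0:ℝ), (1:ℝ)) ((1:ℝ), (0:ℝ))) b := by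
    have hcurve : HasDerivAt (fun y : ℝ => ((a, y) : ℝ × ℝ)) (((0:ℝ), (1:ℝ)) : ℝ × ℝ) b :=
      (hasDerivAt_const b a).prodMk (hasDerivAt_id b)
    have h2 : HasDerivAt (fun y => fderiv ℝ G (a, y))
        (fderiv ℝ (fderiv ℝ G) (a, b) ((0:ℝ), (1:ℝ))) b :=
      hDf.comp_hasDerivAt b hcurve
    have h3 : HasDerivAt (fun y => fderiv ℝ G (a, y) ((1:ℝ), (0:ℝ)))
        (fderiv ℝ (fderiv ℝ G) (a, b) ((0:ℝ), (1:ℝ)) ((1:ℝ), (0:ℝ))) b := by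
      have := h2.clm_apply (hasDerivAt_const b (((1:ℝ), (0:ℝ)) : ℝ × ℝ))
      simpa using this
    apply h3.congr_of_eventuallyEq
    have hop : {y : ℝ | (a, y) ∈ U} ∈ nhds b := by
      have : Continuous (fun y : ℝ => ((a, y) : ℝ × ℝ)) := by fun_prop
      exact this.isOpen_preimage U hU |>.mem_nhds hz
    filter_upwards [hop] with y hy
    exact (aux_hasDerivAt_fst hU hg hy).deriv
  rw [hL.deriv, hR.deriv]
  exact hsym.eq _ _

lemma aux_swap_iter {U₁ U₂ : Set ℝ} (h1 : IsOpen U₁) (h2 : IsOpen U₂) (m : ℕ) :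
    ∀ (g : ℝ → ℝ → ℝ), ContDiffOn ℝ (⊤ : ℕ∞) (fun z : ℝ × ℝ => g z.1 z.2) (U₁ ×ˢ U₂) →
    ∀ a ∈ U₁, ∀ b ∈ U₂,
    deriv (fun x => iteratedDeriv m (fun y => g x y) b) a
      = iteratedDeriv m (fun y => deriv (fun x => g x y) a) b := by
  induction m with
  | zero => intro g hg a ha b hb; simp
  | succ m ih =>
    intro g hg a ha b hb
    have hd2 : ContDiffOn ℝ (⊤ : ℕ∞) (fun z : ℝ × ℝ => deriv (fun y => g z.1 y) z.2) (U₁ ×ˢ U₂) :=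
      aux_contDiffOn_d2 (h1.prod h2) hg
    have e : (fun x => iteratedDeriv (m+1) (fun y => g x y) b)
        = fun x => iteratedDeriv m (fun y => deriv (fun y' => g x y') y) b := by
      funext x; rw [iteratedDeriv_succ']
    rw [e, ih (fun x y => deriv (fun y' => g x y') y) hd2 a ha b hb, iteratedDeriv_succ']
    apply Filter.EventuallyEq.iteratedDeriv_eq
    filter_upwards [h2.mem_nhds hb] with y hy
    exact aux_schwarz (h1.prod h2) hg (Set.mk_mem_prod ha hy)

end TwoVar


lemma aux_slice_smooth {n : ℕ} {ε₀ : ℝ} {V : Set ℝ} {B : Set ((Fin n → ℝ) × (Fin n → ℝ))}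
    {F : ℝ → ℝ → (Fin n → ℝ) → (Fin n → ℝ) → ℝ → ℝ}
    (hF : ContDiffOn ℝ (⊤ : ℕ∞)
      (fun z : ℝ × ℝ × ((Fin n → ℝ) × (Fin n → ℝ)) × ℝ =>
        F z.1 z.2.1 z.2.2.1.1 z.2.2.1.2 z.2.2.2)
      (V ×ˢ (Set.univ : Set ℝ) ×ˢ B ×ˢ Set.Ioo (-ε₀) ε₀))
    {c : ℝ → ℝ × ℝ × ((Fin n → ℝ) × (Fin n → ℝ))} (hc : ContDiff ℝ (⊤ : ℕ∞) c)
    {U₁ : Set ℝ} (hmem : ∀ s ∈ U₁, (c s).1 ∈ V ∧ (c s).2.2 ∈ B) :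
    ContDiffOn ℝ (⊤ : ℕ∞)
      (fun w : ℝ × ℝ => F (c w.1).1 (c w.1).2.1 (c w.1).2.2.1 (c w.1).2.2.2 w.2)
      (U₁ ×ˢ Set.Ioo (-ε₀) ε₀) := by
  have hm : ContDiff ℝ (⊤ : ℕ∞) (fun w : ℝ × ℝ =>
      (((c w.1).1, ((c w.1).2.1, ((c w.1).2.2, w.2))) : ℝ × ℝ × ((Fin n → ℝ) × (Fin n → ℝ)) × ℝ)) := by
    have h1 : ContDiff ℝ (⊤ : ℕ∞) (fun w : ℝ × ℝ => c w.1) := hc.comp contDiff_fst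
    exact h1.fst.prodMk (h1.snd.fst.prodMk ((h1.snd.snd).prodMk contDiff_snd))
  have := hF.comp (hm.contDiffOn (s := U₁ ×ˢ Set.Ioo (-ε₀) ε₀)) ?_
  · exact this
  · intro w hw
    rcases hw with ⟨hw1, hw2⟩
    exact ⟨(hmem w.1 hw1).1, trivial, (hmem w.1 hw1).2, hw2⟩
/-- Partial derivative in the action `I`. -/
noncomputable def pderivI (n : ℕ) (F : ℝ → ℝ → (Fin n → ℝ) → (Fin n → ℝ) → ℝ)
    (I φ : ℝ) (p q : Fin n → ℝ) : ℝ :=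
  deriv (fun I' => F I' φ p q) I

/-- Partial derivative in the angle `φ`. -/
noncomputable def pderivPhi (n : ℕ) (F : ℝ → ℝ → (Fin n → ℝ) → (Fin n → ℝ) → ℝ)
    (I φ : ℝ) (p q : Fin n → ℝ) : ℝ :=
  deriv (fun φ' => F I φ' p q) φ

/-- Partial derivative in `pᵢ`. -/
noncomputable def pderivP (n : ℕ) (F : ℝ → ℝ → (Fin n → ℝ) → (Fin n → ℝ) → ℝ)
    (i : Fin n) (I φ : ℝ) (p q : Fin n → ℝ) : ℝ :=
  deriv (fun s => F I φ (Function.update p i s) q) (p i)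

/-- Partial derivative in `qᵢ`. -/
noncomputable def pderivQ (n : ℕ) (F : ℝ → ℝ → (Fin n → ℝ) → (Fin n → ℝ) → ℝ)
    (i : Fin n) (I φ : ℝ) (p q : Fin n → ℝ) : ℝ :=
  deriv (fun s => F I φ p (Function.update q i s)) (q i)

/-- The Poisson bracket
`{F, G} = F_I G_φ − F_φ G_I + Σᵢ (F_{pᵢ} G_{qᵢ} − F_{qᵢ} G_{pᵢ})`. -/
noncomputable def poissonBracket (n : ℕ)
    (F G : ℝ → ℝ → (Fin n → ℝ) → (Fin n → ℝ) → ℝ)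
    (I φ : ℝ) (p q : Fin n → ℝ) : ℝ :=
  pderivI n F I φ p q * pderivPhi n G I φ p q
    - pderivPhi n F I φ p q * pderivI n G I φ p q
    + ∑ i : Fin n, (pderivP n F i I φ p q * pderivQ n G i I φ p q
        - pderivQ n F i I φ p q * pderivP n G i I φ p q)

/-- Lemma, part (ii): if `𝓗 = Σ εᵏ 𝓗ₖ` is `φ`-independent with
`𝓗₀ = 𝓗₀(I)`, `∂𝓗₀/∂I ≠ 0` on `V`, and `𝓙 = Σ εᵏ 𝓙ₖ` is a first integral of `𝓗`
(vanishing Poisson bracket) with `𝓙₀` `φ`-independent, then every coefficient `𝓙ₖ`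
is `φ`-independent on `P = V × ℝ × B`, and consequently so is `𝓙(·, ε)`. -/
theorem first_integral_phi_independent (n : ℕ) (ε₀ : ℝ) (hε₀ : 0 < ε₀)
    (V : Set ℝ) (hVopen : IsOpen V)
    (B : Set ((Fin n → ℝ) × (Fin n → ℝ))) (hBopen : IsOpen B) (hBconn : IsConnected B)
    (H J : ℝ → ℝ → (Fin n → ℝ) → (Fin n → ℝ) → ℝ → ℝ)
    (Hk Jk : ℕ → ℝ → ℝ → (Fin n → ℝ) → (Fin n → ℝ) → ℝ)
    -- smoothness of `𝓗`, `𝓙` on `P × (−ε₀, ε₀)` and of all coefficients: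
    (hHsmooth : ContDiffOn ℝ (⊤ : ℕ∞)
      (fun z : ℝ × ℝ × ((Fin n → ℝ) × (Fin n → ℝ)) × ℝ =>
        H z.1 z.2.1 z.2.2.1.1 z.2.2.1.2 z.2.2.2)
      (V ×ˢ (Set.univ : Set ℝ) ×ˢ B ×ˢ Set.Ioo (-ε₀) ε₀))
    (hJsmooth : ContDiffOn ℝ (⊤ : ℕ∞)
      (fun z : ℝ × ℝ × ((Fin n → ℝ) × (Fin n → ℝ)) × ℝ =>
        J z.1 z.2.1 z.2.2.1.1 z.2.2.1.2 z.2.2.2)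
      (V ×ˢ (Set.univ : Set ℝ) ×ˢ B ×ˢ Set.Ioo (-ε₀) ε₀))
    (hHksmooth : ∀ k, ContDiff ℝ (⊤ : ℕ∞)
      (fun z : ℝ × ℝ × (Fin n → ℝ) × (Fin n → ℝ) => Hk k z.1 z.2.1 z.2.2.1 z.2.2.2))
    (hJksmooth : ∀ k, ContDiff ℝ (⊤ : ℕ∞)
      (fun z : ℝ × ℝ × (Fin n → ℝ) × (Fin n → ℝ) => Jk k z.1 z.2.1 z.2.2.1 z.2.2.2))
    -- `2π`-periodicity in the angle `φ`:
    (hHper : ∀ k I φ p q, Hk k I (φ + 2 * Real.pi) p q = Hk k I φ p q)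
    (hJper : ∀ k I φ p q, Jk k I (φ + 2 * Real.pi) p q = Jk k I φ p q)
    (hJper' : ∀ I φ p q ε, J I (φ + 2 * Real.pi) p q ε = J I φ p q ε)
    -- convergent expansions `𝓗 = Σ εᵏ 𝓗ₖ`, `𝓙 = Σ εᵏ 𝓙ₖ` for `|ε| < ε₀`:
    (hHsum : ∀ I φ p q ε, I ∈ V → (p, q) ∈ B → |ε| < ε₀ →
      HasSum (fun k => ε ^ k * Hk k I φ p q) (H I φ p q ε))
    (hJsum : ∀ I φ p q ε, I ∈ V → (p, q) ∈ B → |ε| < ε₀ →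
      HasSum (fun k => ε ^ k * Jk k I φ p q) (J I φ p q ε))
    -- (a) `𝓗` is independent of `φ`:
    (ha : ∀ I φ φ' p q ε, H I φ p q ε = H I φ' p q ε)
    -- (b) `𝓗₀` depends on `I` only, with `∂𝓗₀/∂I ≠ 0` on `V`:
    (hb1 : ∀ I φ φ' p q p' q', Hk 0 I φ p q = Hk 0 I φ' p' q')
    (hb2 : ∀ I ∈ V, ∀ φ p q, deriv (fun I' => Hk 0 I' φ p q) I ≠ 0)
    -- (c) the Poisson bracket `{𝓗(·,ε), 𝓙(·,ε)}` vanishes identically on `P`: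
    (hc : ∀ ε : ℝ, |ε| < ε₀ → ∀ I ∈ V, ∀ φ : ℝ, ∀ p q, (p, q) ∈ B →
      poissonBracket n (fun I' φ' p' q' => H I' φ' p' q' ε)
        (fun I' φ' p' q' => J I' φ' p' q' ε) I φ p q = 0)
    -- (d) `𝓙₀` is independent of `φ`:
    (hd : ∀ I φ φ' p q, Jk 0 I φ p q = Jk 0 I φ' p q) :
    (∀ k : ℕ, ∀ I ∈ V, ∀ φ φ' : ℝ, ∀ p q, (p, q) ∈ B →
      Jk k I φ p q = Jk k I φ' p q) ∧
    (∀ ε : ℝ, |ε| < ε₀ → ∀ I ∈ V, ∀ φ φ' : ℝ, ∀ p q, (p, q) ∈ B →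
      J I φ p q ε = J I φ' p q ε) := by
  classical
  have hIoo : IsOpen (Set.Ioo (-ε₀) ε₀) := isOpen_Ioo
  have h0mem : (0:ℝ) ∈ Set.Ioo (-ε₀) ε₀ := ⟨by linarith, hε₀⟩
  have hJcoeff : ∀ (I φ : ℝ) (p q : Fin n → ℝ), I ∈ V → (p, q) ∈ B → ∀ m : ℕ,
      iteratedDeriv m (fun ε => J I φ p q ε) 0 = (m.factorial : ℝ) * Jk m I φ p q :=
    fun I φ p q hI hB m =>
      aux_iteratedDeriv_of_hasSum hε₀ (fun ε hε => hJsum I φ p q ε hI hB hε) m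
  have hH0 : ∀ (I' φ0 : ℝ) (p' q' : Fin n → ℝ), I' ∈ V → (p', q') ∈ B →
      H I' φ0 p' q' 0 = Hk 0 I' φ0 p' q' := by
    intro I' φ0 p' q' hI hB
    have h1 := hHsum I' φ0 p' q' 0 hI hB (by simpa using hε₀)
    have h2 : HasSum (fun m => (0:ℝ) ^ m * Hk m I' φ0 p' q') ((0:ℝ) ^ 0 * Hk 0 I' φ0 p' q') :=
      hasSum_single 0 (fun b hb => by simp [zero_pow hb])
    have h3 := h1.unique h2
    simpa using h3
  have Cmain : ∀ k : ℕ, ∀ I ∈ V, ∀ (φ φ' : ℝ), ∀ p q, (p, q) ∈ B →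
      Jk k I φ p q = Jk k I φ' p q := by
    intro k
    induction k using Nat.strong_induction_on with
    | _ k IH =>
    intro I hI φ φ' p q hBpq
    -- two-variable slices and their smoothness
    have hsliceφJ : ContDiffOn ℝ (⊤ : ℕ∞) (fun w : ℝ × ℝ => J I w.1 p q w.2)
        ((Set.univ : Set ℝ) ×ˢ Set.Ioo (-ε₀) ε₀) :=
      aux_slice_smooth hJsmooth (c := fun φ0 : ℝ => (I, φ0, (p, q)))
        (contDiff_const.prodMk (contDiff_id.prodMk contDiff_const)) (fun s _ => ⟨hI, hBpq⟩)
    have hsliceIH : ContDiffOn ℝ (⊤ : ℕ∞) (fun w : ℝ × ℝ => H w.1 0 p q w.2)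
        (V ×ˢ Set.Ioo (-ε₀) ε₀) :=
      aux_slice_smooth hHsmooth (c := fun I' : ℝ => (I', 0, (p, q)))
        (contDiff_id.prodMk contDiff_const) (fun s hs => ⟨hs, hBpq⟩)
    have hUp : ∀ i : Fin n, IsOpen {s : ℝ | (Function.update p i s, q) ∈ B} := by
      intro i
      have hcont : Continuous (fun s : ℝ =>
          ((Function.update p i s, q) : (Fin n → ℝ) × (Fin n → ℝ))) :=
        ((contDiff_update (𝕜 := ℝ) ⊤ p i).continuous).prodMk continuous_const
      exact hcont.isOpen_preimage _ hBopen
    have hUpmem : ∀ i, p i ∈ {s : ℝ | (Function.update p i s, q) ∈ B} := by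
      intro i
      simpa [Function.update_eq_self] using hBpq
    have hUq : ∀ i : Fin n, IsOpen {s : ℝ | (p, Function.update q i s) ∈ B} := by
      intro i
      have hcont : Continuous (fun s : ℝ =>
          ((p, Function.update q i s) : (Fin n → ℝ) × (Fin n → ℝ))) :=
        continuous_const.prodMk ((contDiff_update (𝕜 := ℝ) ⊤ q i).continuous)
      exact hcont.isOpen_preimage _ hBopen
    have hUqmem : ∀ i, q i ∈ {s : ℝ | (p, Function.update q i s) ∈ B} := by
      intro i
      simpa [Function.update_eq_self] using hBpq
    have hslicepH : ∀ i, ContDiffOn ℝ (⊤ : ℕ∞)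
        (fun w : ℝ × ℝ => H I 0 (Function.update p i w.1) q w.2)
        ({s : ℝ | (Function.update p i s, q) ∈ B} ×ˢ Set.Ioo (-ε₀) ε₀) :=
      fun i => aux_slice_smooth hHsmooth
        (c := fun s : ℝ => (I, 0, (Function.update p i s, q)))
        (contDiff_const.prodMk (contDiff_const.prodMk ((contDiff_update (𝕜 := ℝ) (⊤ : ℕ∞) p i).prodMk contDiff_const)))
        (fun s hs => ⟨hI, hs⟩)
    have hsliceqH : ∀ i, ContDiffOn ℝ (⊤ : ℕ∞)
        (fun w : ℝ × ℝ => H I 0 p (Function.update q i w.1) w.2)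
        ({s : ℝ | (p, Function.update q i s) ∈ B} ×ˢ Set.Ioo (-ε₀) ε₀) :=
      fun i => aux_slice_smooth hHsmooth
        (c := fun s : ℝ => (I, 0, (p, Function.update q i s)))
        (contDiff_const.prodMk (contDiff_const.prodMk (contDiff_const.prodMk (contDiff_update (𝕜 := ℝ) (⊤ : ℕ∞) q i))))
        (fun s hs => ⟨hI, hs⟩)
    have hslicepJ : ∀ (φ0 : ℝ) (i : Fin n), ContDiffOn ℝ (⊤ : ℕ∞)
        (fun w : ℝ × ℝ => J I φ0 (Function.update p i w.1) q w.2)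
        ({s : ℝ | (Function.update p i s, q) ∈ B} ×ˢ Set.Ioo (-ε₀) ε₀) :=
      fun φ0 i => aux_slice_smooth hJsmooth
        (c := fun s : ℝ => (I, φ0, (Function.update p i s, q)))
        (contDiff_const.prodMk (contDiff_const.prodMk ((contDiff_update (𝕜 := ℝ) (⊤ : ℕ∞) p i).prodMk contDiff_const)))
        (fun s hs => ⟨hI, hs⟩)
    have hsliceqJ : ∀ (φ0 : ℝ) (i : Fin n), ContDiffOn ℝ (⊤ : ℕ∞)
        (fun w : ℝ × ℝ => J I φ0 p (Function.update q i w.1) w.2)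
        ({s : ℝ | (p, Function.update q i s) ∈ B} ×ˢ Set.Ioo (-ε₀) ε₀) :=
      fun φ0 i => aux_slice_smooth hJsmooth
        (c := fun s : ℝ => (I, φ0, (p, Function.update q i s)))
        (contDiff_const.prodMk (contDiff_const.prodMk (contDiff_const.prodMk (contDiff_update (𝕜 := ℝ) (⊤ : ℕ∞) q i))))
        (fun s hs => ⟨hI, hs⟩)
    -- smoothness in ε of all the partial-derivative slices
    have hA : ContDiffOn ℝ (⊤ : ℕ∞) (fun ε => deriv (fun I' => H I' 0 p q ε) I) (Set.Ioo (-ε₀) ε₀) :=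
      aux_contDiffOn_d1_slice hVopen hIoo hsliceIH hI
    have hu : ∀ φ0 : ℝ, ContDiffOn ℝ (⊤ : ℕ∞) (fun ε => deriv (fun x => J I x p q ε) φ0)
        (Set.Ioo (-ε₀) ε₀) :=
      fun φ0 => aux_contDiffOn_d1_slice isOpen_univ hIoo hsliceφJ (mem_univ φ0)
    have hPH : ∀ i, ContDiffOn ℝ (⊤ : ℕ∞)
        (fun ε => deriv (fun s => H I 0 (Function.update p i s) q ε) (p i))
        (Set.Ioo (-ε₀) ε₀) :=
      fun i => aux_contDiffOn_d1_slice (hUp i) hIoo (hslicepH i) (hUpmem i)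
    have hQH : ∀ i, ContDiffOn ℝ (⊤ : ℕ∞)
        (fun ε => deriv (fun s => H I 0 p (Function.update q i s) ε) (q i))
        (Set.Ioo (-ε₀) ε₀) :=
      fun i => aux_contDiffOn_d1_slice (hUq i) hIoo (hsliceqH i) (hUqmem i)
    have hPJ : ∀ (φ0 : ℝ) (i : Fin n), ContDiffOn ℝ (⊤ : ℕ∞)
        (fun ε => deriv (fun s => J I φ0 (Function.update p i s) q ε) (p i))
        (Set.Ioo (-ε₀) ε₀) :=
      fun φ0 i => aux_contDiffOn_d1_slice (hUp i) hIoo (hslicepJ φ0 i) (hUpmem i)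
    have hQJ : ∀ (φ0 : ℝ) (i : Fin n), ContDiffOn ℝ (⊤ : ℕ∞)
        (fun ε => deriv (fun s => J I φ0 p (Function.update q i s) ε) (q i))
        (Set.Ioo (-ε₀) ε₀) :=
      fun φ0 i => aux_contDiffOn_d1_slice (hUq i) hIoo (hsliceqJ φ0 i) (hUqmem i)
    -- swapping deriv in φ with iterated deriv in ε
    have hswapφ : ∀ (m : ℕ) (φ0 : ℝ),
        deriv (fun x => iteratedDeriv m (fun ε => J I x p q ε) 0) φ0
          = iteratedDeriv m (fun ε => deriv (fun x => J I x p q ε) φ0) 0 :=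
      fun m φ0 => aux_swap_iter isOpen_univ hIoo m (fun x ε => J I x p q ε) hsliceφJ
        φ0 (mem_univ φ0) 0 h0mem
    -- lower-order φ-derivatives vanish
    have hu0 : ∀ m, m < k → ∀ φ0 : ℝ,
        iteratedDeriv m (fun ε => deriv (fun x => J I x p q ε) φ0) 0 = 0 := by
      intro m hm φ0
      rw [← hswapφ m φ0]
      have e : (fun x => iteratedDeriv m (fun ε => J I x p q ε) 0)
          = fun _ => (m.factorial : ℝ) * Jk m I 0 p q := by
        funext x
        rw [hJcoeff I x p q hI hBpq m, IH m hm I hI x 0 p q hBpq]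
      rw [e]
      exact deriv_const _ _
    -- the functional equation from the vanishing Poisson bracket
    have heq : ∀ (φ0 : ℝ), ∀ ε ∈ Set.Ioo (-ε₀) ε₀,
        deriv (fun I' => H I' 0 p q ε) I * deriv (fun x => J I x p q ε) φ0
          + ∑ i : Fin n,
            (deriv (fun s => H I 0 (Function.update p i s) q ε) (p i)
                * deriv (fun s => J I φ0 p (Function.update q i s) ε) (q i)
              - deriv (fun s => H I 0 p (Function.update q i s) ε) (q i)
                * deriv (fun s => J I φ0 (Function.update p i s) q ε) (p i)) = 0 := by
      intro φ0 ε hε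
      have hbr := hc ε (abs_lt.mpr ⟨hε.1, hε.2⟩) I hI φ0 p q hBpq
      simp only [poissonBracket, pderivI, pderivPhi, pderivP, pderivQ] at hbr
      have h1 : deriv (fun x => H I x p q ε) φ0 = 0 := by
        rw [show (fun x => H I x p q ε) = (fun _ => H I 0 p q ε) from
          funext fun x => ha I x 0 p q ε]
        exact deriv_const _ _
      rw [h1] at hbr
      have h2 : (fun I' => H I' φ0 p q ε) = (fun I' => H I' 0 p q ε) :=
        funext fun I' => ha I' φ0 0 p q ε
      have h3 : ∀ i, (fun s => H I φ0 (Function.update p i s) q ε)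
          = (fun s => H I 0 (Function.update p i s) q ε) :=
        fun i => funext fun s => ha I φ0 0 (Function.update p i s) q ε
      have h4 : ∀ i, (fun s => H I φ0 p (Function.update q i s) ε)
          = (fun s => H I 0 p (Function.update q i s) ε) :=
        fun i => funext fun s => ha I φ0 0 p (Function.update q i s) ε
      rw [h2] at hbr
      simp only [h3, h4, zero_mul, sub_zero] at hbr
      exact hbr
    -- values of the H-slices at ε = 0
    have hPH0 : ∀ i, deriv (fun s => H I 0 (Function.update p i s) q 0) (p i) = 0 := by
      intro i
      have hev : (fun s => H I 0 (Function.update p i s) q 0)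
          =ᶠ[nhds (p i)] (fun _ => Hk 0 I 0 p q) := by
        filter_upwards [(hUp i).mem_nhds (hUpmem i)] with s hs
        rw [hH0 I 0 (Function.update p i s) q hI hs]
        exact hb1 I 0 0 (Function.update p i s) q p q
      rw [hev.deriv_eq]
      exact deriv_const _ _
    have hQH0 : ∀ i, deriv (fun s => H I 0 p (Function.update q i s) 0) (q i) = 0 := by
      intro i
      have hev : (fun s => H I 0 p (Function.update q i s) 0)
          =ᶠ[nhds (q i)] (fun _ => Hk 0 I 0 p q) := by
        filter_upwards [(hUq i).mem_nhds (hUqmem i)] with s hs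
        rw [hH0 I 0 p (Function.update q i s) hI hs]
        exact hb1 I 0 0 p (Function.update q i s) p q
      rw [hev.deriv_eq]
      exact deriv_const _ _
    have hAne : deriv (fun I' => H I' 0 p q 0) I ≠ 0 := by
      have hA0 : deriv (fun I' => H I' 0 p q 0) I = deriv (fun I' => Hk 0 I' 0 p q) I := by
        apply Filter.EventuallyEq.deriv_eq
        filter_upwards [hVopen.mem_nhds hI] with I' hI'
        exact hH0 I' 0 p q hI' hBpq
      rw [hA0]
      exact hb2 I hI 0 p q
    -- φ-independence of the lower-order J-factors
    have hQJeq : ∀ (i : Fin n) (m : ℕ), m < k → ∀ φ0 : ℝ,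
        iteratedDeriv m (fun ε => deriv (fun s => J I φ0 p (Function.update q i s) ε) (q i)) 0
          = iteratedDeriv m (fun ε => deriv (fun s => J I 0 p (Function.update q i s) ε) (q i)) 0 := by
      intro i m hm φ0
      have hsw : ∀ φ1 : ℝ,
          iteratedDeriv m (fun ε => deriv (fun s => J I φ1 p (Function.update q i s) ε) (q i)) 0
            = deriv (fun s => iteratedDeriv m (fun ε => J I φ1 p (Function.update q i s) ε) 0) (q i) :=
        fun φ1 => (aux_swap_iter (hUq i) hIoo m (fun s ε => J I φ1 p (Function.update q i s) ε)
          (hsliceqJ φ1 i) (q i) (hUqmem i) 0 h0mem).symm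
      rw [hsw φ0, hsw 0]
      apply Filter.EventuallyEq.deriv_eq
      filter_upwards [(hUq i).mem_nhds (hUqmem i)] with s hs
      rw [hJcoeff I φ0 p (Function.update q i s) hI hs m,
        hJcoeff I 0 p (Function.update q i s) hI hs m,
        IH m hm I hI φ0 0 p (Function.update q i s) hs]
    have hPJeq : ∀ (i : Fin n) (m : ℕ), m < k → ∀ φ0 : ℝ,
        iteratedDeriv m (fun ε => deriv (fun s => J I φ0 (Function.update p i s) q ε) (p i)) 0
          = iteratedDeriv m (fun ε => deriv (fun s => J I 0 (Function.update p i s) q ε) (p i)) 0 := by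
      intro i m hm φ0
      have hsw : ∀ φ1 : ℝ,
          iteratedDeriv m (fun ε => deriv (fun s => J I φ1 (Function.update p i s) q ε) (p i)) 0
            = deriv (fun s => iteratedDeriv m (fun ε => J I φ1 (Function.update p i s) q ε) 0) (p i) :=
        fun φ1 => (aux_swap_iter (hUp i) hIoo m (fun s ε => J I φ1 (Function.update p i s) q ε)
          (hslicepJ φ1 i) (p i) (hUpmem i) 0 h0mem).symm
      rw [hsw φ0, hsw 0]
      apply Filter.EventuallyEq.deriv_eq
      filter_upwards [(hUp i).mem_nhds (hUpmem i)] with s hs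
      rw [hJcoeff I φ0 (Function.update p i s) q hI hs m,
        hJcoeff I 0 (Function.update p i s) q hI hs m,
        IH m hm I hI φ0 0 (Function.update p i s) q hs]
    -- the main identity at order k
    have hmain : ∀ φ0 : ℝ,
        deriv (fun I' => H I' 0 p q 0) I
            * iteratedDeriv k (fun ε => deriv (fun x => J I x p q ε) φ0) 0
          + (∑ i : Fin n,
              ((∑ j ∈ Finset.range (k+1), (k.choose j : ℝ)
                  * (iteratedDeriv j (fun ε => deriv (fun s => H I 0 (Function.update p i s) q ε) (p i)) 0
                    * iteratedDeriv (k-j) (fun ε => deriv (fun s => J I φ0 p (Function.update q i s) ε) (q i)) 0))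
               - (∑ j ∈ Finset.range (k+1), (k.choose j : ℝ)
                  * (iteratedDeriv j (fun ε => deriv (fun s => H I 0 p (Function.update q i s) ε) (q i)) 0
                    * iteratedDeriv (k-j) (fun ε => deriv (fun s => J I φ0 (Function.update p i s) q ε) (p i)) 0)))) = 0 := by
      intro φ0
      have hzero : iteratedDeriv k (fun ε =>
          deriv (fun I' => H I' 0 p q ε) I * deriv (fun x => J I x p q ε) φ0
            + ∑ i : Fin n,
              (deriv (fun s => H I 0 (Function.update p i s) q ε) (p i)
                  * deriv (fun s => J I φ0 p (Function.update q i s) ε) (q i)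
                - deriv (fun s => H I 0 p (Function.update q i s) ε) (q i)
                  * deriv (fun s => J I φ0 (Function.update p i s) q ε) (p i))) 0 = 0 := by
        have hev : (fun ε =>
            deriv (fun I' => H I' 0 p q ε) I * deriv (fun x => J I x p q ε) φ0
              + ∑ i : Fin n,
                (deriv (fun s => H I 0 (Function.update p i s) q ε) (p i)
                    * deriv (fun s => J I φ0 p (Function.update q i s) ε) (q i)
                  - deriv (fun s => H I 0 p (Function.update q i s) ε) (q i)
                    * deriv (fun s => J I φ0 (Function.update p i s) q ε) (p i)))
            =ᶠ[nhds (0:ℝ)] (fun _ => (0:ℝ)) := by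
          filter_upwards [hIoo.mem_nhds h0mem] with ε hε
          exact heq φ0 ε hε
        rw [hev.iteratedDeriv_eq k]
        exact aux_iteratedDeriv_zero_fun k 0
      have hsumsmooth : ∀ i : Fin n, ContDiffOn ℝ (⊤ : ℕ∞) (fun ε =>
          deriv (fun s => H I 0 (Function.update p i s) q ε) (p i)
              * deriv (fun s => J I φ0 p (Function.update q i s) ε) (q i)
            - deriv (fun s => H I 0 p (Function.update q i s) ε) (q i)
              * deriv (fun s => J I φ0 (Function.update p i s) q ε) (p i)) (Set.Ioo (-ε₀) ε₀) :=
        fun i => ((hPH i).mul (hQJ φ0 i)).sub ((hQH i).mul (hPJ φ0 i))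
      rw [aux_iteratedDeriv_add hIoo h0mem ((hA).mul (hu φ0))
        (ContDiffOn.sum (fun i _ => hsumsmooth i)) k] at hzero
      rw [aux_iteratedDeriv_finsum Finset.univ hIoo h0mem (fun i _ => hsumsmooth i) k] at hzero
      have e2 : ∀ i : Fin n, iteratedDeriv k (fun ε =>
          deriv (fun s => H I 0 (Function.update p i s) q ε) (p i)
              * deriv (fun s => J I φ0 p (Function.update q i s) ε) (q i)
            - deriv (fun s => H I 0 p (Function.update q i s) ε) (q i)
              * deriv (fun s => J I φ0 (Function.update p i s) q ε) (p i)) 0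
          = (∑ j ∈ Finset.range (k+1), (k.choose j : ℝ)
              * (iteratedDeriv j (fun ε => deriv (fun s => H I 0 (Function.update p i s) q ε) (p i)) 0
                * iteratedDeriv (k-j) (fun ε => deriv (fun s => J I φ0 p (Function.update q i s) ε) (q i)) 0))
            - (∑ j ∈ Finset.range (k+1), (k.choose j : ℝ)
              * (iteratedDeriv j (fun ε => deriv (fun s => H I 0 p (Function.update q i s) ε) (q i)) 0
                * iteratedDeriv (k-j) (fun ε => deriv (fun s => J I φ0 (Function.update p i s) q ε) (p i)) 0)) := by
        intro i
        rw [aux_iteratedDeriv_sub hIoo h0mem ((hPH i).mul (hQJ φ0 i)) ((hQH i).mul (hPJ φ0 i)) k,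
          aux_iteratedDeriv_mul hIoo k _ _ (hPH i) (hQJ φ0 i) 0 h0mem,
          aux_iteratedDeriv_mul hIoo k _ _ (hQH i) (hPJ φ0 i) 0 h0mem]
      rw [Finset.sum_congr rfl (fun i _ => e2 i)] at hzero
      rw [aux_iteratedDeriv_mul hIoo k _ _ hA (hu φ0) 0 h0mem] at hzero
      have e3 : ∑ j ∈ Finset.range (k+1), (k.choose j : ℝ)
            * (iteratedDeriv j (fun ε => deriv (fun I' => H I' 0 p q ε) I) 0
              * iteratedDeriv (k-j) (fun ε => deriv (fun x => J I x p q ε) φ0) 0)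
          = deriv (fun I' => H I' 0 p q 0) I
              * iteratedDeriv k (fun ε => deriv (fun x => J I x p q ε) φ0) 0 := by
        rw [Finset.sum_eq_single_of_mem 0 (Finset.mem_range.mpr (Nat.succ_pos k))]
        · simp [iteratedDeriv_zero]
        · intro j hj hj0
          rw [hu0 (k-j) (by
            have := Finset.mem_range.mp hj
            omega) φ0]
          ring
      rw [e3] at hzero
      exact hzero
    -- cancel the nonzero factor
    have hcancel : ∀ φ0 : ℝ,
        iteratedDeriv k (fun ε => deriv (fun x => J I x p q ε) φ0) 0
          = iteratedDeriv k (fun ε => deriv (fun x => J I x p q ε) 0) 0 := by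
      intro φ0
      have h1 := hmain φ0
      have h2 := hmain 0
      have hS : (∑ i : Fin n,
              ((∑ j ∈ Finset.range (k+1), (k.choose j : ℝ)
                  * (iteratedDeriv j (fun ε => deriv (fun s => H I 0 (Function.update p i s) q ε) (p i)) 0
                    * iteratedDeriv (k-j) (fun ε => deriv (fun s => J I φ0 p (Function.update q i s) ε) (q i)) 0))
               - (∑ j ∈ Finset.range (k+1), (k.choose j : ℝ)
                  * (iteratedDeriv j (fun ε => deriv (fun s => H I 0 p (Function.update q i s) ε) (q i)) 0
                    * iteratedDeriv (k-j) (fun ε => deriv (fun s => J I φ0 (Function.update p i s) q ε) (p i)) 0))))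
          = (∑ i : Fin n,
              ((∑ j ∈ Finset.range (k+1), (k.choose j : ℝ)
                  * (iteratedDeriv j (fun ε => deriv (fun s => H I 0 (Function.update p i s) q ε) (p i)) 0
                    * iteratedDeriv (k-j) (fun ε => deriv (fun s => J I 0 p (Function.update q i s) ε) (q i)) 0))
               - (∑ j ∈ Finset.range (k+1), (k.choose j : ℝ)
                  * (iteratedDeriv j (fun ε => deriv (fun s => H I 0 p (Function.update q i s) ε) (q i)) 0
                    * iteratedDeriv (k-j) (fun ε => deriv (fun s => J I 0 (Function.update p i s) q ε) (p i)) 0)))) := by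
        apply Finset.sum_congr rfl
        intro i _
        congr 1
        · apply Finset.sum_congr rfl
          intro j hj
          rcases Nat.eq_zero_or_pos j with hj0 | hj0
          · subst hj0
            simp [iteratedDeriv_zero, hPH0 i]
          · rw [hQJeq i (k-j) (by
              have := Finset.mem_range.mp hj
              omega) φ0]
        · apply Finset.sum_congr rfl
          intro j hj
          rcases Nat.eq_zero_or_pos j with hj0 | hj0
          · subst hj0
            simp [iteratedDeriv_zero, hQH0 i]
          · rw [hPJeq i (k-j) (by
              have := Finset.mem_range.mp hj
              omega) φ0]
      rw [hS] at h1
      have h3 : deriv (fun I' => H I' 0 p q 0) I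
            * iteratedDeriv k (fun ε => deriv (fun x => J I x p q ε) φ0) 0
          = deriv (fun I' => H I' 0 p q 0) I
            * iteratedDeriv k (fun ε => deriv (fun x => J I x p q ε) 0) 0 := by
        linarith
      exact mul_left_cancel₀ hAne h3
    -- the coefficient Jk k is affine in φ with slope gc, and periodic, hence constant
    have hdiffJk : Differentiable ℝ (fun x : ℝ => Jk k I x p q) := by
      have hcomp : ContDiff ℝ (⊤ : ℕ∞) (fun x : ℝ => Jk k I x p q) :=
        (hJksmooth k).comp
          (contDiff_const.prodMk (contDiff_id.prodMk (contDiff_const.prodMk contDiff_const)))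
      exact hcomp.differentiable (by simp)
    have hderiv_const : ∀ φ0 : ℝ, deriv (fun x => Jk k I x p q) φ0
        = (k.factorial : ℝ)⁻¹
            * iteratedDeriv k (fun ε => deriv (fun x => J I x p q ε) 0) 0 := by
      intro φ0
      have e : (fun x => Jk k I x p q)
          = fun x => (k.factorial : ℝ)⁻¹ * iteratedDeriv k (fun ε => J I x p q ε) 0 := by
        funext x
        rw [hJcoeff I x p q hI hBpq k]
        have : (k.factorial : ℝ) ≠ 0 := Nat.cast_ne_zero.mpr k.factorial_ne_zero
        field_simp
      rw [e, deriv_const_mul_field, hswapφ k φ0, hcancel φ0]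
    set gc : ℝ := (k.factorial : ℝ)⁻¹
        * iteratedDeriv k (fun ε => deriv (fun x => J I x p q ε) 0) 0 with hgc
    have hFdiff : Differentiable ℝ (fun x : ℝ => Jk k I x p q - gc * x) :=
      hdiffJk.sub (differentiable_fun_id.const_mul gc)
    have hFderiv : ∀ x : ℝ, deriv (fun x => Jk k I x p q - gc * x) x = 0 := by
      intro x
      rw [deriv_fun_sub (hdiffJk x) ((differentiable_fun_id.const_mul gc) x), hderiv_const x]
      have h5 : deriv (fun y : ℝ => gc * y) x = gc := by
        rw [deriv_const_mul_field]
        simp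
      rw [h5, sub_self]
    have hFconst := is_const_of_deriv_eq_zero hFdiff hFderiv
    have hper : gc * (2 * Real.pi) = 0 := by
      have h1 := hFconst (0 + 2 * Real.pi) 0
      rw [hJper k I 0 p q] at h1
      ring_nf at h1 ⊢
      linarith
    have hgc0 : gc = 0 := by
      rcases mul_eq_zero.mp hper with h | h
      · exact h
      · exact absurd h (by positivity)
    have hderiv0 : ∀ x : ℝ, deriv (fun x => Jk k I x p q) x = 0 := by
      intro x
      rw [hderiv_const x, hgc0]
    exact is_const_of_deriv_eq_zero hdiffJk hderiv0 φ φ'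
  refine ⟨Cmain, ?_⟩
  intro ε hε I hI φ φ' p q hB
  have h1 := hJsum I φ p q ε hI hB hε
  have h2 := hJsum I φ' p q ε hI hB hε
  have he : (fun m => ε ^ m * Jk m I φ p q) = (fun m => ε ^ m * Jk m I φ' p q) :=
    funext fun m => by rw [Cmain m I hI φ φ' p q hB]
  rw [he] at h1
  exact h1.unique h2
end

section
/- (Lemma, part (i)): Let n ≥ 0, ε₀ > 0, let V ⊆ ℝ be open and B ⊆ ℝ^{2n} be open and connected, and let P = V × ℝ × B with canonical coordinates (I, φ, p, q), φ an angle (all functions below 2π-periodic in φ). Let 𝓗, 𝓙 : P × (−ε₀, ε₀) → ℝ be smooth, analytic in ε with expansions 𝓗 = 𝓗₀ + ε𝓗₁ + O(ε²) and 𝓙 = 𝓙₀ + ε𝓙₁ + O(ε²). Assume: (a) 𝓗 is independent of φ; (b) 𝓗₀ depends only on I, and ∂𝓗₀/∂I ≠ 0 on V; (c) {𝓗(·,ε), 𝓙(·,ε)} = 0 identically for each ε ∈ (−ε₀, ε₀); (d) 𝓙₀ is independent of φ. Then the Poisson bracket {𝓗₁, 𝓙₀} vanishes identically on P. -/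
open Filter Topology


set_option maxHeartbeats 1000000

noncomputable def fmsOf (a : ℕ → ℝ) : FormalMultilinearSeries ℝ ℝ ℝ :=
  fun k => a k • ContinuousMultilinearMap.mkPiAlgebraFin ℝ k ℝ

lemma fmsOf_apply (a : ℕ → ℝ) (k : ℕ) (y : ℝ) : (fmsOf a k) (fun _ => y) = a k * y ^ k := by
  simp [fmsOf, List.prod_ofFn]

lemma fmsOf_coeff (a : ℕ → ℝ) (k : ℕ) : (fmsOf a).coeff k = a k := by
  have h0 : (fmsOf a).coeff k = (fmsOf a k) (fun _ => (1:ℝ)) := rfl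
  rw [h0, fmsOf_apply, one_pow, mul_one]

lemma fmsOf_norm_le (a : ℕ → ℝ) (k : ℕ) : ‖fmsOf a k‖ ≤ |a k| := by
  calc ‖fmsOf a k‖ ≤ ‖a k‖ * ‖ContinuousMultilinearMap.mkPiAlgebraFin ℝ k ℝ‖ :=
        ContinuousMultilinearMap.opNorm_smul_le _ _
    _ ≤ ‖a k‖ * 1 := by
        gcongr
        simpa using ContinuousMultilinearMap.norm_mkPiAlgebraFin_le (𝕜 := ℝ) (A := ℝ) (n := k)
    _ = |a k| := by simp [Real.norm_eq_abs]

lemma hasFPowerSeriesAt_of_hasSum {f : ℝ → ℝ} {a : ℕ → ℝ} {ε₀ : ℝ} (hε₀ : 0 < ε₀)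
    (h : ∀ ε, |ε| < ε₀ → HasSum (fun k => ε ^ k * a k) (f ε)) :
    HasFPowerSeriesAt f (fmsOf a) 0 := by
  have h2 : 0 < ε₀ / 2 := by linarith
  refine ⟨ENNReal.ofReal (ε₀ / 2), ?_, by simpa using ENNReal.ofReal_pos.2 h2, ?_⟩
  · have hsum : Summable fun k => |a k * (ε₀ / 2) ^ k| := by
      have := (h (ε₀ / 2) (by rw [abs_of_pos h2]; linarith)).summable
      simpa [mul_comm] using this.abs
    have hs2 : Summable fun k => ‖fmsOf a k‖ * ((ε₀ / 2).toNNReal : ℝ) ^ k := by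
      refine hsum.of_nonneg_of_le (fun k => by positivity) (fun k => ?_)
      rw [Real.coe_toNNReal _ h2.le, abs_mul, abs_pow, abs_of_pos h2]
      exact mul_le_mul_of_nonneg_right (fmsOf_norm_le a k) (by positivity)
    have := (fmsOf a).le_radius_of_summable_norm hs2
    rw [ENNReal.ofReal]
    exact this
  · intro y hy
    have hy' : |y| < ε₀ := by
      rw [EMetric.mem_ball, edist_dist, Real.dist_eq, sub_zero,
        ENNReal.ofReal_lt_ofReal_iff h2] at hy
      calc |y| < ε₀ / 2 := hy
        _ < ε₀ := by linarith
    have heq : (fun n => (fmsOf a n) fun _ => y) = fun k => y ^ k * a k := by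
      funext k; rw [fmsOf_apply, mul_comm]
    rw [heq, zero_add]
    exact h y hy'

lemma val_zero_of_hasSum {f : ℝ → ℝ} {a : ℕ → ℝ} {ε₀ : ℝ} (hε₀ : 0 < ε₀)
    (h : ∀ ε, |ε| < ε₀ → HasSum (fun k => ε ^ k * a k) (f ε)) : f 0 = a 0 := by
  have h0 := h 0 (by simpa using hε₀)
  have h1 : HasSum (fun k => (0:ℝ) ^ k * a k) (a 0) := by
    have he : (fun k => (0:ℝ) ^ k * a k) = fun k => if k = 0 then a 0 else 0 := by
      funext k; cases k <;> simp
    rw [he]; simpa using hasSum_ite_eq 0 (a 0)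
  exact h0.unique h1

lemma hasDerivAt_coeff_one {f : ℝ → ℝ} {a : ℕ → ℝ} {ε₀ : ℝ} (hε₀ : 0 < ε₀)
    (h : ∀ ε, |ε| < ε₀ → HasSum (fun k => ε ^ k * a k) (f ε)) : HasDerivAt f (a 1) 0 := by
  have := (hasFPowerSeriesAt_of_hasSum hε₀ h).hasDerivAt
  rw [fmsOf_apply, one_pow, mul_one] at this
  exact this

lemma coeff_unique {f : ℝ → ℝ} {a b : ℕ → ℝ} {ε₀ : ℝ} (hε₀ : 0 < ε₀)
    (ha : ∀ ε, |ε| < ε₀ → HasSum (fun k => ε ^ k * a k) (f ε))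
    (hb : ∀ ε, |ε| < ε₀ → HasSum (fun k => ε ^ k * b k) (f ε)) : a = b := by
  have := (hasFPowerSeriesAt_of_hasSum hε₀ ha).eq_formalMultilinearSeries
    (hasFPowerSeriesAt_of_hasSum hε₀ hb)
  funext k
  have := congrArg (fun p => FormalMultilinearSeries.coeff p k) this
  simpa [fmsOf_coeff] using this

lemma clairaut {g : ℝ × ℝ → ℝ} {U : Set (ℝ × ℝ)} (hU : IsOpen U) {a b : ℝ}
    (hz : (a, b) ∈ U) (hg : ContDiffOn ℝ (⊤ : ℕ∞) g U) :
    HasDerivAt (fun ε => deriv (fun s => g (s, ε)) a)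
      (deriv (fun s => deriv (fun ε => g (s, ε)) b) a) b := by
  have hgat : ∀ z ∈ U, ContDiffAt ℝ (⊤ : ℕ∞) g z := fun z hzU => (hg z hzU).contDiffAt (hU.mem_nhds hzU)
  set f' : ℝ × ℝ → (ℝ × ℝ →L[ℝ] ℝ) := fderiv ℝ g with hf'def
  have hderiv : ∀ᶠ z in 𝓝 (a, b), HasFDerivAt g (f' z) z := by
    filter_upwards [hU.mem_nhds hz] with z hzU
    exact ((hgat z hzU).differentiableAt (by simp)).hasFDerivAt
  have hf'c : ContDiffAt ℝ 1 f' (a, b) := (hgat _ hz).fderiv_right (by exact WithTop.coe_le_coe.2 le_top)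
  have hf'' : HasFDerivAt f' (fderiv ℝ f' (a, b)) (a, b) :=
    (hf'c.differentiableAt one_ne_zero).hasFDerivAt
  set f'' := fderiv ℝ f' (a, b) with hf''def
  have hsym : f'' (0, 1) (1, 0) = f'' (1, 0) (0, 1) :=
    second_derivative_symmetric_of_eventually hderiv hf'' _ _
  have hmemnhd : ∀ z ∈ U, HasFDerivAt g (f' z) z :=
    fun z hzU => ((hgat z hzU).differentiableAt (by simp)).hasFDerivAt

  -- local formula in ε direction
  have hloc1 : (fun ε => deriv (fun s => g (s, ε)) a) =ᶠ[𝓝 b] fun ε => f' (a, ε) (1, 0) := by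
    have hcont : ContinuousAt (fun ε : ℝ => ((a : ℝ), ε)) b := by fun_prop
    filter_upwards [hcont.preimage_mem_nhds (hU.mem_nhds hz)] with ε hε
    have h1 : HasDerivAt (fun s => g (s, ε)) (f' (a, ε) (1, 0)) a := by
      have h2 : HasDerivAt (fun s : ℝ => (s, ε)) ((1 : ℝ), (0 : ℝ)) a :=
        (hasDerivAt_id a).prodMk (hasDerivAt_const a ε)
      exact (hmemnhd _ hε).comp_hasDerivAt a h2
    exact h1.deriv
  have hAd : HasDerivAt (fun ε => f' (a, ε) (1, 0)) (f'' (0, 1) (1, 0)) b := by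
    have h3 : HasDerivAt (fun ε : ℝ => ((a : ℝ), ε)) ((0 : ℝ), (1 : ℝ)) b :=
      (hasDerivAt_const b a).prodMk (hasDerivAt_id b)
    have h4 : HasDerivAt (fun ε => f' (a, ε)) (f'' (0, 1)) b :=
      hf''.comp_hasDerivAt b h3
    have h5 := h4.clm_apply (hasDerivAt_const b ((1 : ℝ), (0 : ℝ)))
    simpa using h5
  have hA : HasDerivAt (fun ε => deriv (fun s => g (s, ε)) a) (f'' (0, 1) (1, 0)) b :=
    hAd.congr_of_eventuallyEq hloc1
  -- identify the stated derivative value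
  have hloc2 : (fun s => deriv (fun ε => g (s, ε)) b) =ᶠ[𝓝 a] fun s => f' (s, b) (0, 1) := by
    have hcont : ContinuousAt (fun s : ℝ => (s, (b : ℝ))) a := by fun_prop
    filter_upwards [hcont.preimage_mem_nhds (hU.mem_nhds hz)] with s hs
    have h1 : HasDerivAt (fun ε => g (s, ε)) (f' (s, b) (0, 1)) b := by
      have h2 : HasDerivAt (fun ε : ℝ => ((s : ℝ), ε)) ((0 : ℝ), (1 : ℝ)) b :=
        (hasDerivAt_const b s).prodMk (hasDerivAt_id b)
      exact (hmemnhd _ hs).comp_hasDerivAt b h2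
    exact h1.deriv
  have hBd : HasDerivAt (fun s => f' (s, b) (0, 1)) (f'' (1, 0) (0, 1)) a := by
    have h3 : HasDerivAt (fun s : ℝ => (s, (b : ℝ))) ((1 : ℝ), (0 : ℝ)) a :=
      (hasDerivAt_id a).prodMk (hasDerivAt_const a b)
    have h4 : HasDerivAt (fun s => f' (s, b)) (f'' (1, 0)) a :=
      hf''.comp_hasDerivAt a h3
    have h5 := h4.clm_apply (hasDerivAt_const a ((0 : ℝ), (1 : ℝ)))
    simpa using h5
  have hB : HasDerivAt (fun s => deriv (fun ε => g (s, ε)) b) (f'' (1, 0) (0, 1)) a :=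
    hBd.congr_of_eventuallyEq hloc2
  rw [hB.deriv, ← hsym]
  exact hA
lemma keyC {g : ℝ × ℝ → ℝ} {W : Set ℝ} (hW : IsOpen W) {s₀ ε₀ : ℝ} (hε₀ : 0 < ε₀)
    (hs₀ : s₀ ∈ W) (hg : ContDiffOn ℝ (⊤ : ℕ∞) g (W ×ˢ Set.Ioo (-ε₀) ε₀))
    {a : ℕ → ℝ → ℝ}
    (hsum : ∀ s ∈ W, ∀ ε, |ε| < ε₀ → HasSum (fun k => ε ^ k * a k s) (g (s, ε))) :
    deriv (fun s => g (s, 0)) s₀ = deriv (a 0) s₀ ∧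
      HasDerivAt (fun ε => deriv (fun s => g (s, ε)) s₀) (deriv (a 1) s₀) 0 := by
  have hUopen : IsOpen (W ×ˢ Set.Ioo (-ε₀) ε₀) := hW.prod isOpen_Ioo
  have hz : (s₀, (0 : ℝ)) ∈ W ×ˢ Set.Ioo (-ε₀) ε₀ :=
    ⟨hs₀, by constructor <;> simp <;> linarith⟩
  constructor
  · apply Filter.EventuallyEq.deriv_eq
    filter_upwards [hW.mem_nhds hs₀] with s hs
    exact val_zero_of_hasSum hε₀ (fun ε hε => hsum s hs ε hε)
  · have h1 := clairaut hUopen hz hg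
    have h2 : deriv (fun s => deriv (fun ε => g (s, ε)) 0) s₀ = deriv (a 1) s₀ := by
      apply Filter.EventuallyEq.deriv_eq
      filter_upwards [hW.mem_nhds hs₀] with s hs
      exact (hasDerivAt_coeff_one hε₀ (fun ε hε => hsum s hs ε hε)).deriv
    rwa [h2] at h1

lemma keyD (n : ℕ) {ε₀ : ℝ} (hε₀ : 0 < ε₀) {V : Set ℝ} (hVopen : IsOpen V)
    {B : Set ((Fin n → ℝ) × (Fin n → ℝ))} (hBopen : IsOpen B)
    (H : ℝ → ℝ → (Fin n → ℝ) → (Fin n → ℝ) → ℝ → ℝ)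
    (Hk : ℕ → ℝ → ℝ → (Fin n → ℝ) → (Fin n → ℝ) → ℝ)
    (hHsmooth : ContDiffOn ℝ (⊤ : ℕ∞)
      (fun z : ℝ × ℝ × ((Fin n → ℝ) × (Fin n → ℝ)) × ℝ =>
        H z.1 z.2.1 z.2.2.1.1 z.2.2.1.2 z.2.2.2)
      (V ×ˢ (Set.univ : Set ℝ) ×ˢ B ×ˢ Set.Ioo (-ε₀) ε₀))
    (hHsum : ∀ I φ p q ε, I ∈ V → (p, q) ∈ B → |ε| < ε₀ →
      HasSum (fun k => ε ^ k * Hk k I φ p q) (H I φ p q ε))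
    {I : ℝ} (hI : I ∈ V) (ψ : ℝ) {p q : Fin n → ℝ} (hpq : (p, q) ∈ B) :
    (deriv (fun I' => H I' ψ p q 0) I = pderivI n (Hk 0) I ψ p q ∧
      HasDerivAt (fun ε => deriv (fun I' => H I' ψ p q ε) I) (pderivI n (Hk 1) I ψ p q) 0) ∧
    (deriv (fun φ' => H I φ' p q 0) ψ = pderivPhi n (Hk 0) I ψ p q ∧
      HasDerivAt (fun ε => deriv (fun φ' => H I φ' p q ε) ψ) (pderivPhi n (Hk 1) I ψ p q) 0) ∧
    (∀ i : Fin n,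
      deriv (fun s => H I ψ (Function.update p i s) q 0) (p i) = pderivP n (Hk 0) i I ψ p q ∧
      HasDerivAt (fun ε => deriv (fun s => H I ψ (Function.update p i s) q ε) (p i))
        (pderivP n (Hk 1) i I ψ p q) 0) ∧
    (∀ i : Fin n,
      deriv (fun s => H I ψ p (Function.update q i s) 0) (q i) = pderivQ n (Hk 0) i I ψ p q ∧
      HasDerivAt (fun ε => deriv (fun s => H I ψ p (Function.update q i s) ε) (q i))
        (pderivQ n (Hk 1) i I ψ p q) 0) := by
  refine ⟨?_, ?_, ?_, ?_⟩
  · have hg : ContDiffOn ℝ (⊤ : ℕ∞) (fun z : ℝ × ℝ => H z.1 ψ p q z.2) (V ×ˢ Set.Ioo (-ε₀) ε₀) := by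
      have he : ContDiff ℝ (⊤ : ℕ∞) (fun z : ℝ × ℝ =>
          ((z.1, ψ, (p, q), z.2) : ℝ × ℝ × ((Fin n → ℝ) × (Fin n → ℝ)) × ℝ)) :=
        contDiff_fst.prodMk (contDiff_const.prodMk (contDiff_const.prodMk contDiff_snd))
      exact hHsmooth.comp he.contDiffOn (fun z hz => ⟨hz.1, trivial, hpq, hz.2⟩)
    exact keyC hVopen hε₀ hI hg (a := fun k s => Hk k s ψ p q)
      (fun s hs ε hε => hHsum s ψ p q ε hs hpq hε)
  · have hg : ContDiffOn ℝ (⊤ : ℕ∞) (fun z : ℝ × ℝ => H I z.1 p q z.2)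
        ((Set.univ : Set ℝ) ×ˢ Set.Ioo (-ε₀) ε₀) := by
      have he : ContDiff ℝ (⊤ : ℕ∞) (fun z : ℝ × ℝ =>
          ((I, z.1, (p, q), z.2) : ℝ × ℝ × ((Fin n → ℝ) × (Fin n → ℝ)) × ℝ)) :=
        contDiff_const.prodMk (contDiff_fst.prodMk (contDiff_const.prodMk contDiff_snd))
      exact hHsmooth.comp he.contDiffOn (fun z hz => ⟨hI, trivial, hpq, hz.2⟩)
    exact keyC isOpen_univ hε₀ (Set.mem_univ ψ) hg (a := fun k s => Hk k I s p q)
      (fun s _ ε hε => hHsum I s p q ε hI hpq hε)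
  · intro i
    have hWopen : IsOpen {s : ℝ | (Function.update p i s, q) ∈ B} := by
      have hcont : Continuous fun s : ℝ => ((Function.update p i s, q) :
          (Fin n → ℝ) × (Fin n → ℝ)) :=
        ((contDiff_update (𝕜 := ℝ) ⊤ p i).continuous).prodMk continuous_const
      exact hBopen.preimage hcont
    have hmem : p i ∈ {s : ℝ | (Function.update p i s, q) ∈ B} := by
      show (Function.update p i (p i), q) ∈ B
      rw [Function.update_eq_self]; exact hpq
    have hg : ContDiffOn ℝ (⊤ : ℕ∞) (fun z : ℝ × ℝ => H I ψ (Function.update p i z.1) q z.2)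
        ({s : ℝ | (Function.update p i s, q) ∈ B} ×ˢ Set.Ioo (-ε₀) ε₀) := by
      have he : ContDiff ℝ (⊤ : ℕ∞) (fun z : ℝ × ℝ =>
          ((I, ψ, (Function.update p i z.1, q), z.2) :
            ℝ × ℝ × ((Fin n → ℝ) × (Fin n → ℝ)) × ℝ)) :=
        contDiff_const.prodMk (contDiff_const.prodMk
          ((((contDiff_update (𝕜 := ℝ) (⊤ : ℕ∞) p i).comp contDiff_fst).prodMk contDiff_const).prodMk contDiff_snd))
      exact hHsmooth.comp he.contDiffOn (fun z hz => ⟨hI, trivial, hz.1, hz.2⟩)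
    exact keyC hWopen hε₀ hmem hg (a := fun k s => Hk k I ψ (Function.update p i s) q)
      (fun s hs ε hε => hHsum I ψ (Function.update p i s) q ε hI hs hε)
  · intro i
    have hWopen : IsOpen {s : ℝ | (p, Function.update q i s) ∈ B} := by
      have hcont : Continuous fun s : ℝ => ((p, Function.update q i s) :
          (Fin n → ℝ) × (Fin n → ℝ)) :=
        continuous_const.prodMk ((contDiff_update (𝕜 := ℝ) ⊤ q i).continuous)
      exact hBopen.preimage hcont
    have hmem : q i ∈ {s : ℝ | (p, Function.update q i s) ∈ B} := by
      show (p, Function.update q i (q i)) ∈ B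
      rw [Function.update_eq_self]; exact hpq
    have hg : ContDiffOn ℝ (⊤ : ℕ∞) (fun z : ℝ × ℝ => H I ψ p (Function.update q i z.1) z.2)
        ({s : ℝ | (p, Function.update q i s) ∈ B} ×ˢ Set.Ioo (-ε₀) ε₀) := by
      have he : ContDiff ℝ (⊤ : ℕ∞) (fun z : ℝ × ℝ =>
          ((I, ψ, (p, Function.update q i z.1), z.2) :
            ℝ × ℝ × ((Fin n → ℝ) × (Fin n → ℝ)) × ℝ)) :=
        contDiff_const.prodMk (contDiff_const.prodMk
          ((contDiff_const.prodMk ((contDiff_update (𝕜 := ℝ) (⊤ : ℕ∞) q i).comp contDiff_fst)).prodMk contDiff_snd))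
      exact hHsmooth.comp he.contDiffOn (fun z hz => ⟨hI, trivial, hz.1, hz.2⟩)
    exact keyC hWopen hε₀ hmem hg (a := fun k s => Hk k I ψ p (Function.update q i s))
      (fun s hs ε hε => hHsum I ψ p (Function.update q i s) ε hI hs hε)
/-- Lemma, part (i): if `𝓗 = 𝓗₀ + ε𝓗₁ + O(ε²)` is `φ`-independent
with `𝓗₀ = 𝓗₀(I)`, `∂𝓗₀/∂I ≠ 0` on `V`, and `𝓙 = 𝓙₀ + ε𝓙₁ + O(ε²)` is a first
integral of `𝓗` (vanishing Poisson bracket) with `𝓙₀` `φ`-independent, then the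
Poisson bracket `{𝓗₁, 𝓙₀}` vanishes identically on `P = V × ℝ × B`. -/
theorem poissonBracket_H1_J0_eq_zero (n : ℕ) (ε₀ : ℝ) (hε₀ : 0 < ε₀)
    (V : Set ℝ) (hVopen : IsOpen V)
    (B : Set ((Fin n → ℝ) × (Fin n → ℝ))) (hBopen : IsOpen B) (hBconn : IsConnected B)
    (H J : ℝ → ℝ → (Fin n → ℝ) → (Fin n → ℝ) → ℝ → ℝ)
    (Hk Jk : ℕ → ℝ → ℝ → (Fin n → ℝ) → (Fin n → ℝ) → ℝ)
    -- smoothness of `𝓗`, `𝓙` on `P × (−ε₀, ε₀)` and of all coefficients: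
    (hHsmooth : ContDiffOn ℝ (⊤ : ℕ∞)
      (fun z : ℝ × ℝ × ((Fin n → ℝ) × (Fin n → ℝ)) × ℝ =>
        H z.1 z.2.1 z.2.2.1.1 z.2.2.1.2 z.2.2.2)
      (V ×ˢ (Set.univ : Set ℝ) ×ˢ B ×ˢ Set.Ioo (-ε₀) ε₀))
    (hJsmooth : ContDiffOn ℝ (⊤ : ℕ∞)
      (fun z : ℝ × ℝ × ((Fin n → ℝ) × (Fin n → ℝ)) × ℝ =>
        J z.1 z.2.1 z.2.2.1.1 z.2.2.1.2 z.2.2.2)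
      (V ×ˢ (Set.univ : Set ℝ) ×ˢ B ×ˢ Set.Ioo (-ε₀) ε₀))
    (hHksmooth : ∀ k, ContDiff ℝ (⊤ : ℕ∞)
      (fun z : ℝ × ℝ × (Fin n → ℝ) × (Fin n → ℝ) => Hk k z.1 z.2.1 z.2.2.1 z.2.2.2))
    (hJksmooth : ∀ k, ContDiff ℝ (⊤ : ℕ∞)
      (fun z : ℝ × ℝ × (Fin n → ℝ) × (Fin n → ℝ) => Jk k z.1 z.2.1 z.2.2.1 z.2.2.2))
    -- `2π`-periodicity in the angle `φ`:
    (hHper : ∀ k I φ p q, Hk k I (φ + 2 * Real.pi) p q = Hk k I φ p q)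
    (hJper : ∀ k I φ p q, Jk k I (φ + 2 * Real.pi) p q = Jk k I φ p q)
    (hJper' : ∀ I φ p q ε, J I (φ + 2 * Real.pi) p q ε = J I φ p q ε)
    -- convergent expansions `𝓗 = Σ εᵏ 𝓗ₖ`, `𝓙 = Σ εᵏ 𝓙ₖ` for `|ε| < ε₀`:
    (hHsum : ∀ I φ p q ε, I ∈ V → (p, q) ∈ B → |ε| < ε₀ →
      HasSum (fun k => ε ^ k * Hk k I φ p q) (H I φ p q ε))
    (hJsum : ∀ I φ p q ε, I ∈ V → (p, q) ∈ B → |ε| < ε₀ →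
      HasSum (fun k => ε ^ k * Jk k I φ p q) (J I φ p q ε))
    -- (a) `𝓗` is independent of `φ`:
    (ha : ∀ I φ φ' p q ε, H I φ p q ε = H I φ' p q ε)
    -- (b) `𝓗₀` depends on `I` only, with `∂𝓗₀/∂I ≠ 0` on `V`:
    (hb1 : ∀ I φ φ' p q p' q', Hk 0 I φ p q = Hk 0 I φ' p' q')
    (hb2 : ∀ I ∈ V, ∀ φ p q, deriv (fun I' => Hk 0 I' φ p q) I ≠ 0)
    -- (c) the Poisson bracket `{𝓗(·,ε), 𝓙(·,ε)}` vanishes identically on `P`: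
    (hc : ∀ ε : ℝ, |ε| < ε₀ → ∀ I ∈ V, ∀ φ : ℝ, ∀ p q, (p, q) ∈ B →
      poissonBracket n (fun I' φ' p' q' => H I' φ' p' q' ε)
        (fun I' φ' p' q' => J I' φ' p' q' ε) I φ p q = 0)
    -- (d) `𝓙₀` is independent of `φ`:
    (hd : ∀ I φ φ' p q, Jk 0 I φ p q = Jk 0 I φ' p q) :
    ∀ I ∈ V, ∀ φ : ℝ, ∀ p q, (p, q) ∈ B →
      poissonBracket n (Hk 1) (Jk 0) I φ p q = 0 := by
  intro I hI φ p q hpq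
  -- φ-independence of every coefficient Hk on V × B
  have hHkindep : ∀ (k : ℕ) (I' : ℝ), I' ∈ V → ∀ (p' q' : Fin n → ℝ), (p', q') ∈ B →
      ∀ ψ ψ' : ℝ, Hk k I' ψ p' q' = Hk k I' ψ' p' q' := by
    intro k I' hI' p' q' hpq' ψ ψ'
    have h1 : ∀ ε, |ε| < ε₀ → HasSum (fun k => ε ^ k * Hk k I' ψ p' q') (H I' ψ p' q' ε) :=
      fun ε hε => hHsum I' ψ p' q' ε hI' hpq' hε
    have h2 : ∀ ε, |ε| < ε₀ → HasSum (fun k => ε ^ k * Hk k I' ψ' p' q') (H I' ψ p' q' ε) := by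
      intro ε hε
      have h3 := hHsum I' ψ' p' q' ε hI' hpq' hε
      rwa [ha I' ψ' ψ p' q' ε] at h3
    exact congrFun (coeff_unique hε₀ h1 h2) k
  -- vanishing partial derivatives coming from φ-independence / I-only dependence
  have hb1φ : ∀ (I' ψ : ℝ) (p' q' : Fin n → ℝ), pderivPhi n (Hk 0) I' ψ p' q' = 0 := by
    intro I' ψ p' q'
    have h0 : (fun φ' => Hk 0 I' φ' p' q') = fun _ => Hk 0 I' 0 p' q' := by
      funext φ'; exact hb1 I' φ' 0 p' q' p' q'
    rw [pderivPhi, h0, deriv_const]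
  have hb1p : ∀ (i : Fin n) (I' ψ : ℝ) (p' q' : Fin n → ℝ),
      pderivP n (Hk 0) i I' ψ p' q' = 0 := by
    intro i I' ψ p' q'
    have h0 : (fun s => Hk 0 I' ψ (Function.update p' i s) q') = fun _ => Hk 0 I' 0 p' q' := by
      funext s; exact hb1 I' ψ 0 (Function.update p' i s) q' p' q'
    rw [pderivP, h0, deriv_const]
  have hb1q : ∀ (i : Fin n) (I' ψ : ℝ) (p' q' : Fin n → ℝ),
      pderivQ n (Hk 0) i I' ψ p' q' = 0 := by
    intro i I' ψ p' q'
    have h0 : (fun s => Hk 0 I' ψ p' (Function.update q' i s)) = fun _ => Hk 0 I' 0 p' q' := by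
      funext s; exact hb1 I' ψ 0 p' (Function.update q' i s) p' q'
    rw [pderivQ, h0, deriv_const]
  have hdφ : ∀ (I' ψ : ℝ) (p' q' : Fin n → ℝ), pderivPhi n (Jk 0) I' ψ p' q' = 0 := by
    intro I' ψ p' q'
    have h0 : (fun φ' => Jk 0 I' φ' p' q') = fun _ => Jk 0 I' 0 p' q' := by
      funext φ'; exact hd I' φ' 0 p' q'
    rw [pderivPhi, h0, deriv_const]
  have hH1φ : ∀ ψ : ℝ, pderivPhi n (Hk 1) I ψ p q = 0 := by
    intro ψ
    have h0 : (fun φ' => Hk 1 I φ' p q) = fun _ => Hk 1 I 0 p q := by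
      funext φ'; exact hHkindep 1 I hI p q hpq φ' 0
    rw [pderivPhi, h0, deriv_const]
  -- the order-one equation at every angle ψ
  have main : ∀ ψ : ℝ,
      pderivI n (Hk 0) I ψ p q * pderivPhi n (Jk 1) I ψ p q
        + ∑ i : Fin n, (pderivP n (Hk 1) i I ψ p q * pderivQ n (Jk 0) i I ψ p q
            - pderivQ n (Hk 1) i I ψ p q * pderivP n (Jk 0) i I ψ p q) = 0 := by
    intro ψ
    obtain ⟨⟨hIv, hId⟩, ⟨hφv, hφd⟩, hPall, hQall⟩ :=
      keyD n hε₀ hVopen hBopen H Hk hHsmooth hHsum hI ψ hpq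
    obtain ⟨⟨jIv, jId⟩, ⟨jφv, jφd⟩, jPall, jQall⟩ :=
      keyD n hε₀ hVopen hBopen J Jk hJsmooth hJsum hI ψ hpq
    have hPv : ∀ i : Fin n,
        deriv (fun s => H I ψ (Function.update p i s) q 0) (p i) = pderivP n (Hk 0) i I ψ p q :=
      fun i => (hPall i).1
    have hQv : ∀ i : Fin n,
        deriv (fun s => H I ψ p (Function.update q i s) 0) (q i) = pderivQ n (Hk 0) i I ψ p q :=
      fun i => (hQall i).1
    have jPv : ∀ i : Fin n,
        deriv (fun s => J I ψ (Function.update p i s) q 0) (p i) = pderivP n (Jk 0) i I ψ p q :=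
      fun i => (jPall i).1
    have jQv : ∀ i : Fin n,
        deriv (fun s => J I ψ p (Function.update q i s) 0) (q i) = pderivQ n (Jk 0) i I ψ p q :=
      fun i => (jQall i).1
    have hF : HasDerivAt (fun ε : ℝ =>
        deriv (fun I' => H I' ψ p q ε) I * deriv (fun φ' => J I φ' p q ε) ψ
          - deriv (fun φ' => H I φ' p q ε) ψ * deriv (fun I' => J I' ψ p q ε) I
          + ∑ i : Fin n,
            (deriv (fun s => H I ψ (Function.update p i s) q ε) (p i) *
                deriv (fun s => J I ψ p (Function.update q i s) ε) (q i)
              - deriv (fun s => H I ψ p (Function.update q i s) ε) (q i) *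
                deriv (fun s => J I ψ (Function.update p i s) q ε) (p i)))
        ((pderivI n (Hk 1) I ψ p q * deriv (fun φ' => J I φ' p q 0) ψ
            + deriv (fun I' => H I' ψ p q 0) I * pderivPhi n (Jk 1) I ψ p q)
          - (pderivPhi n (Hk 1) I ψ p q * deriv (fun I' => J I' ψ p q 0) I
            + deriv (fun φ' => H I φ' p q 0) ψ * pderivI n (Jk 1) I ψ p q)
          + ∑ i : Fin n,
            ((pderivP n (Hk 1) i I ψ p q * deriv (fun s => J I ψ p (Function.update q i s) 0) (q i)
              + deriv (fun s => H I ψ (Function.update p i s) q 0) (p i) *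
                  pderivQ n (Jk 1) i I ψ p q)
            - (pderivQ n (Hk 1) i I ψ p q * deriv (fun s => J I ψ (Function.update p i s) q 0) (p i)
              + deriv (fun s => H I ψ p (Function.update q i s) 0) (q i) *
                  pderivP n (Jk 1) i I ψ p q))) 0 :=
      ((hId.mul jφd).sub (hφd.mul jId)).add
        (HasDerivAt.fun_sum (fun i _ => ((hPall i).2.mul (jQall i).2).sub ((hQall i).2.mul (jPall i).2)))
    have hev : (fun ε : ℝ =>
        deriv (fun I' => H I' ψ p q ε) I * deriv (fun φ' => J I φ' p q ε) ψ
          - deriv (fun φ' => H I φ' p q ε) ψ * deriv (fun I' => J I' ψ p q ε) I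
          + ∑ i : Fin n,
            (deriv (fun s => H I ψ (Function.update p i s) q ε) (p i) *
                deriv (fun s => J I ψ p (Function.update q i s) ε) (q i)
              - deriv (fun s => H I ψ p (Function.update q i s) ε) (q i) *
                deriv (fun s => J I ψ (Function.update p i s) q ε) (p i)))
        =ᶠ[nhds (0 : ℝ)] fun _ => (0 : ℝ) := by
      filter_upwards [Ioo_mem_nhds (by linarith : -ε₀ < (0:ℝ)) hε₀] with ε hε
      have hcc := hc ε (abs_lt.2 ⟨hε.1, hε.2⟩) I hI ψ p q hpq
      simpa [poissonBracket, pderivI, pderivPhi, pderivP, pderivQ] using hcc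
    have hF0 := (hasDerivAt_const (0 : ℝ) (0 : ℝ)).congr_of_eventuallyEq hev
    have hzero := hF.unique hF0
    rw [hIv, hφv, jIv, jφv] at hzero
    simp only [hPv, hQv, jPv, jQv] at hzero
    rw [hb1φ, hH1φ ψ, hdφ] at hzero
    simp only [hb1p, hb1q, mul_zero, zero_mul, add_zero, zero_add, sub_zero] at hzero
    exact hzero
  -- φ-independence of the various ingredients
  have hIψ : ∀ ψ : ℝ, pderivI n (Hk 0) I ψ p q = pderivI n (Hk 0) I 0 p q := by
    intro ψ
    rw [pderivI, pderivI]
    congr 1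
    funext I'
    exact hb1 I' ψ 0 p q p q
  have hpψ : ∀ (i : Fin n) (ψ : ℝ),
      pderivP n (Hk 1) i I ψ p q = pderivP n (Hk 1) i I 0 p q := by
    intro i ψ
    rw [pderivP, pderivP]
    apply Filter.EventuallyEq.deriv_eq
    have hWopen : IsOpen {s : ℝ | (Function.update p i s, q) ∈ B} := by
      have hcont : Continuous fun s : ℝ => ((Function.update p i s, q) :
          (Fin n → ℝ) × (Fin n → ℝ)) :=
        ((contDiff_update (𝕜 := ℝ) ⊤ p i).continuous).prodMk continuous_const
      exact hBopen.preimage hcont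
    have hmem : p i ∈ {s : ℝ | (Function.update p i s, q) ∈ B} := by
      show (Function.update p i (p i), q) ∈ B
      rw [Function.update_eq_self]; exact hpq
    filter_upwards [hWopen.mem_nhds hmem] with s hs
    exact hHkindep 1 I hI (Function.update p i s) q hs ψ 0
  have hqψ : ∀ (i : Fin n) (ψ : ℝ),
      pderivQ n (Hk 1) i I ψ p q = pderivQ n (Hk 1) i I 0 p q := by
    intro i ψ
    rw [pderivQ, pderivQ]
    apply Filter.EventuallyEq.deriv_eq
    have hWopen : IsOpen {s : ℝ | (p, Function.update q i s) ∈ B} := by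
      have hcont : Continuous fun s : ℝ => ((p, Function.update q i s) :
          (Fin n → ℝ) × (Fin n → ℝ)) :=
        continuous_const.prodMk ((contDiff_update (𝕜 := ℝ) ⊤ q i).continuous)
      exact hBopen.preimage hcont
    have hmem : q i ∈ {s : ℝ | (p, Function.update q i s) ∈ B} := by
      show (p, Function.update q i (q i)) ∈ B
      rw [Function.update_eq_self]; exact hpq
    filter_upwards [hWopen.mem_nhds hmem] with s hs
    exact hHkindep 1 I hI p (Function.update q i s) hs ψ 0
  have jpψ : ∀ (i : Fin n) (ψ : ℝ),
      pderivP n (Jk 0) i I ψ p q = pderivP n (Jk 0) i I 0 p q := by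
    intro i ψ
    rw [pderivP, pderivP]
    congr 1
    funext s
    exact hd I ψ 0 (Function.update p i s) q
  have jqψ : ∀ (i : Fin n) (ψ : ℝ),
      pderivQ n (Jk 0) i I ψ p q = pderivQ n (Jk 0) i I 0 p q := by
    intro i ψ
    rw [pderivQ, pderivQ]
    congr 1
    funext s
    exact hd I ψ 0 p (Function.update q i s)
  set h' : ℝ := pderivI n (Hk 0) I 0 p q with hh'def
  have hne : h' ≠ 0 := hb2 I hI 0 p q
  set c : ℝ := ∑ i : Fin n, (pderivP n (Hk 1) i I 0 p q * pderivQ n (Jk 0) i I 0 p q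
      - pderivQ n (Hk 1) i I 0 p q * pderivP n (Jk 0) i I 0 p q) with hcdef
  have hmain' : ∀ ψ : ℝ, h' * pderivPhi n (Jk 1) I ψ p q + c = 0 := by
    intro ψ
    have h0 := main ψ
    rw [hIψ ψ] at h0
    rw [show (∑ i : Fin n, (pderivP n (Hk 1) i I ψ p q * pderivQ n (Jk 0) i I ψ p q
        - pderivQ n (Hk 1) i I ψ p q * pderivP n (Jk 0) i I ψ p q)) = c from
      Finset.sum_congr rfl fun i _ => by
        rw [hpψ i ψ, hqψ i ψ, jpψ i ψ, jqψ i ψ]] at h0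
    exact h0
  -- the angular derivative of Jk 1 is the constant -(c / h')
  have hder : ∀ ψ : ℝ, HasDerivAt (fun ψ' => Jk 1 I ψ' p q) (-(c / h')) ψ := by
    intro ψ
    have hdiff : Differentiable ℝ (fun ψ' => Jk 1 I ψ' p q) := by
      have hj := (hJksmooth 1).differentiable (by simp)
      have hinner : Differentiable ℝ (fun ψ' : ℝ =>
          ((I, ψ', p, q) : ℝ × ℝ × (Fin n → ℝ) × (Fin n → ℝ))) :=
        (differentiable_const _).prodMk (differentiable_id.prodMk
          ((differentiable_const _).prodMk (differentiable_const _)))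
      exact hj.comp hinner
    have h1 := (hdiff ψ).hasDerivAt
    have h2 : deriv (fun ψ' => Jk 1 I ψ' p q) ψ = -(c / h') := by
      have h3 := hmain' ψ
      have h4 : pderivPhi n (Jk 1) I ψ p q = deriv (fun ψ' => Jk 1 I ψ' p q) ψ := rfl
      rw [h4] at h3
      field_simp
      linarith
    rwa [h2] at h1
  have hv : ∀ ψ : ℝ, HasDerivAt (fun ψ' => Jk 1 I ψ' p q + (c / h') * ψ') 0 ψ := by
    intro ψ
    have := (hder ψ).add (((hasDerivAt_id ψ).const_mul (c / h')))
    exact this.congr_deriv (by ring)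
  have hconst := is_const_of_deriv_eq_zero (fun ψ => (hv ψ).differentiableAt)
    (fun ψ => (hv ψ).deriv) (2 * Real.pi) 0
  have huper : Jk 1 I (2 * Real.pi) p q = Jk 1 I 0 p q := by
    simpa using hJper 1 I 0 p q
  have hcz : c = 0 := by
    rw [huper] at hconst
    have h2 : (c / h') * (2 * Real.pi) = 0 := by linarith
    rcases mul_eq_zero.1 h2 with h | h
    · rcases div_eq_zero_iff.1 h with h | h
      · exact h
      · exact absurd h hne
    · exact absurd h (by positivity)
  -- conclude
  have hjφ : pderivPhi n (Jk 0) I φ p q = 0 := hdφ I φ p q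
  have hhφ : pderivPhi n (Hk 1) I φ p q = 0 := hH1φ φ
  rw [poissonBracket, hjφ, hhφ]
  rw [show (∑ i : Fin n, (pderivP n (Hk 1) i I φ p q * pderivQ n (Jk 0) i I φ p q
      - pderivQ n (Hk 1) i I φ p q * pderivP n (Jk 0) i I φ p q)) = c from
    Finset.sum_congr rfl fun i _ => by rw [hpψ i φ, hqψ i φ, jpψ i φ, jqψ i φ]]
  rw [hcz]
  ring
end
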